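/- arXiv:1202.0135 — 9 statements merged into one kernel-verified Lean document; each statement's English description precedes it below -/
import Mathlib

section
/- Let T be a positive integer and let X_1, …, X_T be i.i.d. real-valued random variables with common cumulative distribution function F. Let V : ℝ → ℝ be Borel measurable, nonnegative, and monotone nondecreasing. Let S_1 ∈ (0, T] be a real number and let l ∈ ℝ satisfy F(l) = 1 − S_1/T. Then (1 − e^{−S_1})·V(l) ≤ E[V(max_{1 ≤ t ≤ T} X_t)]. -/
open MeasureTheory ProbabilityTheory Real

/-!
The maximum `M` of the `X t` stays below `l` only if every `X t` does, so by independence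
`P {M ≤ l} = F(l)^T = (1 - S₁/T)^T ≤ e^{-S₁}`. Hence `M ≥ l` with probability at least
`1 - e^{-S₁}`, and on that event `V M ≥ V l` by monotonicity.
-/

section

variable {Ω ι β : Type*} [MeasurableSpace Ω] {P : Measure Ω}

theorem ProbabilityTheory.iIndepFun.measure_sup'_le_eq_pow [Fintype ι] [LinearOrder β]
    [MeasurableSpace β] [TopologicalSpace β] [OpensMeasurableSpace β] [ClosedIicTopology β]
    {X : ι → Ω → β} (hX : iIndepFun X P) (hmeas : ∀ i, AEMeasurable (X i) P) (i₀ : ι)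
    (hident : ∀ i, P.map (X i) = P.map (X i₀)) (hne : (Finset.univ : Finset ι).Nonempty)
    (x : β) :
    P {ω | Finset.univ.sup' hne (fun i => X i ω) ≤ x} =
      P {ω | X i₀ ω ≤ x} ^ Fintype.card ι := by
  have hsets :
      {ω | Finset.univ.sup' hne (fun i => X i ω) ≤ x} = ⋂ i, X i ⁻¹' Set.Iic x := by
    ext ω
    simp [Finset.sup'_le_iff]
  have hcdf (i : ι) : P (X i ⁻¹' Set.Iic x) = P {ω | X i₀ ω ≤ x} :=
    IdentDistrib.measure_mem_eq ⟨hmeas i, hmeas i₀, hident i⟩ measurableSet_Iic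
  rw [hsets, hX.meas_iInter fun i => ⟨Set.Iic x, measurableSet_Iic, rfl⟩,
    Finset.prod_congr rfl fun i _ => hcdf i, Finset.prod_const, Finset.card_univ]

theorem one_sub_measure_le_le_measure_ge [IsProbabilityMeasure P] [LinearOrder β]
    (f : Ω → β) (x : β) : 1 - P {ω | f ω ≤ x} ≤ P {ω | x ≤ f ω} := by
  have hcover : {ω | x ≤ f ω} ∪ {ω | f ω ≤ x} = Set.univ := by
    ext ω
    simp [le_total]
  rw [tsub_le_iff_right, ← measure_univ (μ := P), ← hcover]
  exact measure_union_le _ _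

theorem mul_measure_ge_le_lintegral_of_monotone [Preorder β] {g : β → ENNReal}
    (hg : Monotone g) {f : Ω → β} {x : β} (hs : MeasurableSet {ω | x ≤ f ω}) :
    g x * P {ω | x ≤ f ω} ≤ ∫⁻ ω, g (f ω) ∂P := by
  rw [← lintegral_indicator_const hs]
  exact lintegral_mono (Set.indicator_le fun ω hω => hg hω)

end

theorem stmt0_general
    {Ω : Type*} [MeasurableSpace Ω] (P : Measure Ω) [IsProbabilityMeasure P]
    (T : ℕ) (hT : 0 < T)
    (X : Fin T → Ω → ℝ)
    (hmeas : ∀ t, Measurable (X t))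
    (hindep : iIndepFun X P)
    (hident : ∀ t, Measure.map (X t) P = Measure.map (X ⟨0, hT⟩) P)
    (F : ℝ → ℝ) (hF : ∀ x, F x = (P {ω | X ⟨0, hT⟩ ω ≤ x}).toReal)
    (V : ℝ → ℝ) (hVmono : Monotone V)
    (S₁ : ℝ) (hS₁pos : 0 < S₁) (hS₁le : S₁ ≤ T)
    (l : ℝ) (hl : F l = 1 - S₁ / T) :
    ENNReal.ofReal ((1 - Real.exp (-S₁)) * V l)
      ≤ ∫⁻ ω, ENNReal.ofReal
          (V (Finset.univ.sup' ⟨⟨0, hT⟩, Finset.mem_univ _⟩ (fun t => X t ω))) ∂P := by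
  set M : Ω → ℝ :=
    fun ω => Finset.univ.sup' ⟨⟨0, hT⟩, Finset.mem_univ _⟩ (fun t => X t ω)
  have hcdf : P {ω | X ⟨0, hT⟩ ω ≤ l} = ENNReal.ofReal (1 - S₁ / T) := by
    rw [← hl, hF, ENNReal.ofReal_toReal (measure_ne_top _ _)]
  have hmax : P {ω | M ω ≤ l} ≤ ENNReal.ofReal (Real.exp (-S₁)) := by
    have hbase : 0 ≤ 1 - S₁ / T := sub_nonneg.2 ((div_le_one (by exact_mod_cast hT)).2 hS₁le)
    calc P {ω | M ω ≤ l} = P {ω | X ⟨0, hT⟩ ω ≤ l} ^ T := by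
          simpa only [Fintype.card_fin] using
            hindep.measure_sup'_le_eq_pow (fun t => (hmeas t).aemeasurable) _ hident _ l
      _ ≤ ENNReal.ofReal (Real.exp (-S₁)) := by
        rw [hcdf, ← ENNReal.ofReal_pow hbase]
        exact ENNReal.ofReal_le_ofReal (one_sub_div_pow_le_exp_neg hS₁le)
  have hMmeas : Measurable M := by
    convert Finset.measurable_sup' _ fun t _ => hmeas t using 1
    ext ω
    exact (Finset.sup'_apply _ _ ω).symm
  calc ENNReal.ofReal ((1 - Real.exp (-S₁)) * V l)
      = (1 - ENNReal.ofReal (Real.exp (-S₁))) * ENNReal.ofReal (V l) := by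
        rw [ENNReal.ofReal_mul (by simpa using hS₁pos.le), ENNReal.ofReal_sub _ (exp_pos _).le,
          ENNReal.ofReal_one]
    _ ≤ P {ω | l ≤ M ω} * ENNReal.ofReal (V l) := by
        gcongr
        exact (tsub_le_tsub_left hmax 1).trans (one_sub_measure_le_le_measure_ge M l)
    _ ≤ ∫⁻ ω, ENNReal.ofReal (V (M ω)) ∂P := by
        rw [mul_comm]
        exact mul_measure_ge_le_lintegral_of_monotone (ENNReal.ofReal_mono.comp hVmono)
          (measurableSet_le measurable_const hMmeas)

/-- For `T` i.i.d. real random variables `X 0, …, X (T-1)` with common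
cdf `F`, a Borel measurable, nonnegative, nondecreasing `V : ℝ → ℝ`, `S₁ ∈ (0, T]`, and
`l` with `F l = 1 - S₁/T`, one has
`(1 - e^{-S₁}) · V l ≤ E[V (max_t X_t)]` (expectation as a Lebesgue integral in `[0,∞]`). -/
theorem stmt0
    {Ω : Type*} [MeasurableSpace Ω] (P : Measure Ω) [IsProbabilityMeasure P]
    (T : ℕ) (hT : 0 < T)
    (X : Fin T → Ω → ℝ)
    (hmeas : ∀ t, Measurable (X t))
    (hindep : iIndepFun X P)
    (hident : ∀ t, Measure.map (X t) P = Measure.map (X ⟨0, hT⟩) P)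
    (F : ℝ → ℝ) (hF : ∀ x, F x = (P {ω | X ⟨0, hT⟩ ω ≤ x}).toReal)
    (V : ℝ → ℝ) (hVmeas : Measurable V) (hVnonneg : ∀ x, 0 ≤ V x) (hVmono : Monotone V)
    (S₁ : ℝ) (hS₁pos : 0 < S₁) (hS₁le : S₁ ≤ T)
    (l : ℝ) (hl : F l = 1 - S₁ / T) :
    ENNReal.ofReal ((1 - Real.exp (-S₁)) * V l)
      ≤ ∫⁻ ω, ENNReal.ofReal
          (V (Finset.univ.sup' ⟨⟨0, hT⟩, Finset.mem_univ _⟩ (fun t => X t ω))) ∂P :=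
  stmt0_general P T hT X hmeas hindep hident F hF V hVmono S₁ hS₁pos hS₁le l hl
end

section
/- Let T be a positive integer and let X_1, …, X_T be i.i.d. real-valued random variables with common cumulative distribution function F. Let V : ℝ → ℝ be Borel measurable, nonnegative, monotone nondecreasing, and concave. Let S_1 ∈ (0, T] be a real number and let l ∈ ℝ satisfy F(l) = 1 − S_1/T. Assume max_{1 ≤ t ≤ T} X_t is integrable and V(max_{1 ≤ t ≤ T} X_t) is integrable. Then (1 − e^{−S_1})·V(l) ≤ E[V(max_{1 ≤ t ≤ T} X_t)] ≤ V(E[max_{1 ≤ t ≤ T} X_t]). -/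
open MeasureTheory ProbabilityTheory Real

/-!
The event `max_t X_t ≤ l` is the intersection of the independent events `X_t ≤ l`, so it has
probability `F(l)^T = (1 - S₁/T)^T ≤ e^{-S₁}`. Hence `max_t X_t > l` with probability at least
`1 - e^{-S₁}`, and on that event `V(max_t X_t) ≥ V(l)` by monotonicity; since `V ≥ 0`, Markov's
inequality gives the lower bound. The upper bound is Jensen's inequality for the concave `V`.
-/

lemma ProbabilityTheory.iIndepFun.measure_forall_mem_eq_pow {ι Ω α : Type*} [Fintype ι]
    [MeasurableSpace Ω] [MeasurableSpace α] {P : Measure Ω} {X : ι → Ω → α}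
    (hindep : iIndepFun X P) (hmeas : ∀ i, Measurable (X i)) (i₀ : ι)
    (hident : ∀ i, P.map (X i) = P.map (X i₀)) {s : Set α} (hs : MeasurableSet s) :
    P {ω | ∀ i, X i ω ∈ s} = P (X i₀ ⁻¹' s) ^ Fintype.card ι := by
  have hsame : ∀ i, P (X i ⁻¹' s) = P (X i₀ ⁻¹' s) := fun i => by
    rw [← Measure.map_apply (hmeas i) hs, hident i, Measure.map_apply (hmeas i₀) hs]
  have hinter : {ω | ∀ i, X i ω ∈ s} = ⋂ i, X i ⁻¹' s := by
    ext ω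
    simp
  rw [hinter, hindep.meas_iInter fun i => ⟨s, hs, rfl⟩]
  simp [hsame]

lemma mul_measureReal_lt_le_integral_comp {Ω α : Type*} [MeasurableSpace Ω] [Preorder α]
    {μ : Measure Ω} [IsFiniteMeasure μ] {f : Ω → α} {V : α → ℝ} (hV_nonneg : ∀ x, 0 ≤ V x)
    (hV_mono : Monotone V) (hint : Integrable (fun ω => V (f ω)) μ) (x : α) :
    V x * μ.real {ω | x < f ω} ≤ ∫ ω, V (f ω) ∂μ :=
  calc V x * μ.real {ω | x < f ω} ≤ V x * μ.real {ω | V x ≤ V (f ω)} :=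
        mul_le_mul_of_nonneg_left
          (measureReal_mono fun ω (hlt : x < f ω) => hV_mono hlt.le) (hV_nonneg x)
    _ ≤ ∫ ω, V (f ω) ∂μ :=
        mul_meas_ge_le_integral_of_nonneg (ae_of_all _ fun ω => hV_nonneg _) hint _

theorem stmt1_general
    {Ω : Type*} [MeasurableSpace Ω] (P : Measure Ω) [IsProbabilityMeasure P]
    (T : ℕ) (hT : 0 < T)
    (X : Fin T → Ω → ℝ)
    (hmeas : ∀ t, Measurable (X t))
    (hindep : iIndepFun X P)
    (hident : ∀ t, Measure.map (X t) P = Measure.map (X ⟨0, hT⟩) P)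
    (F : ℝ → ℝ) (hF : ∀ x, F x = (P {ω | X ⟨0, hT⟩ ω ≤ x}).toReal)
    (V : ℝ → ℝ) (hVnonneg : ∀ x, 0 ≤ V x) (hVmono : Monotone V)
    (hVconc : ConcaveOn ℝ Set.univ V)
    (S₁ : ℝ) (hS₁le : S₁ ≤ T)
    (l : ℝ) (hl : F l = 1 - S₁ / T)
    (hintmax : Integrable
      (fun ω => Finset.univ.sup' ⟨⟨0, hT⟩, Finset.mem_univ _⟩ (fun t => X t ω)) P)
    (hintV : Integrable
      (fun ω => V (Finset.univ.sup' ⟨⟨0, hT⟩, Finset.mem_univ _⟩ (fun t => X t ω))) P) :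
    (1 - Real.exp (-S₁)) * V l
      ≤ ∫ ω, V (Finset.univ.sup' ⟨⟨0, hT⟩, Finset.mem_univ _⟩ (fun t => X t ω)) ∂P
    ∧ ∫ ω, V (Finset.univ.sup' ⟨⟨0, hT⟩, Finset.mem_univ _⟩ (fun t => X t ω)) ∂P
      ≤ V (∫ ω, Finset.univ.sup' ⟨⟨0, hT⟩, Finset.mem_univ _⟩ (fun t => X t ω) ∂P) := by
  set M : Ω → ℝ := fun ω => Finset.univ.sup' ⟨⟨0, hT⟩, Finset.mem_univ _⟩ (fun t => X t ω)
  have hcdf : P.real {ω | M ω ≤ l} = (1 - S₁ / T) ^ T := by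
    have hevent : {ω | M ω ≤ l} = {ω | ∀ t, X t ω ∈ Set.Iic l} := by
      ext ω
      simp only [Set.mem_ofPred_eq, Set.mem_Iic]
      exact (Finset.sup'_le_iff _ _).trans (by simp)
    rw [hevent, measureReal_def,
      hindep.measure_forall_mem_eq_pow hmeas _ hident measurableSet_Iic,
      ENNReal.toReal_pow, Fintype.card_fin, ← hl, hF]
    rfl
  have htail : 1 - exp (-S₁) ≤ P.real {ω | l < M ω} := by
    have hcompl : {ω | l < M ω} = {ω | M ω ≤ l}ᶜ := by
      ext ω
      simp
    rw [hcompl, measureReal_compl₀ (s := {ω | M ω ≤ l})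
      (hintmax.aemeasurable.nullMeasurable measurableSet_Iic),
      probReal_univ, hcdf]
    linarith [one_sub_div_pow_le_exp_neg hS₁le]
  refine ⟨?_, hVconc.le_map_integral (hVconc.continuousOn isOpen_univ) isClosed_univ
    (ae_of_all _ fun ω => Set.mem_univ _) hintmax hintV⟩
  calc (1 - exp (-S₁)) * V l ≤ V l * P.real {ω | l < M ω} :=
        (mul_le_mul_of_nonneg_right htail (hVnonneg l)).trans_eq (mul_comm _ _)
    _ ≤ ∫ ω, V (M ω) ∂P := mul_measureReal_lt_le_integral_comp hVnonneg hVmono hintV l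

/-- For `T` i.i.d. real random variables with common cdf `F`, a Borel
measurable, nonnegative, nondecreasing, concave `V : ℝ → ℝ`, `S₁ ∈ (0, T]`, `l` with
`F l = 1 - S₁/T`, and integrability of `max_t X_t` and `V (max_t X_t)`:
`(1 - e^{-S₁}) · V l ≤ E[V (max_t X_t)] ≤ V (E[max_t X_t])`. -/
theorem stmt1
    {Ω : Type*} [MeasurableSpace Ω] (P : Measure Ω) [IsProbabilityMeasure P]
    (T : ℕ) (hT : 0 < T)
    (X : Fin T → Ω → ℝ)
    (hmeas : ∀ t, Measurable (X t))
    (hindep : iIndepFun X P)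
    (hident : ∀ t, Measure.map (X t) P = Measure.map (X ⟨0, hT⟩) P)
    (F : ℝ → ℝ) (hF : ∀ x, F x = (P {ω | X ⟨0, hT⟩ ω ≤ x}).toReal)
    (V : ℝ → ℝ) (hVmeas : Measurable V) (hVnonneg : ∀ x, 0 ≤ V x) (hVmono : Monotone V)
    (hVconc : ConcaveOn ℝ Set.univ V)
    (S₁ : ℝ) (hS₁pos : 0 < S₁) (hS₁le : S₁ ≤ T)
    (l : ℝ) (hl : F l = 1 - S₁ / T)
    (hintmax : Integrable
      (fun ω => Finset.univ.sup' ⟨⟨0, hT⟩, Finset.mem_univ _⟩ (fun t => X t ω)) P)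
    (hintV : Integrable
      (fun ω => V (Finset.univ.sup' ⟨⟨0, hT⟩, Finset.mem_univ _⟩ (fun t => X t ω))) P) :
    (1 - Real.exp (-S₁)) * V l
      ≤ ∫ ω, V (Finset.univ.sup' ⟨⟨0, hT⟩, Finset.mem_univ _⟩ (fun t => X t ω)) ∂P
    ∧ ∫ ω, V (Finset.univ.sup' ⟨⟨0, hT⟩, Finset.mem_univ _⟩ (fun t => X t ω)) ∂P
      ≤ V (∫ ω, Finset.univ.sup' ⟨⟨0, hT⟩, Finset.mem_univ _⟩ (fun t => X t ω) ∂P) :=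
  stmt1_general P T hT X hmeas hindep hident F hF V hVnonneg hVmono hVconc S₁ hS₁le l hl hintmax
    hintV
end

section
/- Let α > 1, β > 0, p > 0, and 0 < r_0 < q ≤ p. Then for every γ > 0, e^{γ r_0^{2α}/β²} · ∫_{β² q^{−2α}}^{β² r_0^{−2α}} e^{−γ/g} · (1/(α β² p²)) · (g/β²)^{−1−1/α} dg ≤ β² r_0^{2−2α}/(α γ p²). -/
/-!
On `[a, b] = [β² q^{-2α}, β² r₀^{-2α}]` write `(g/β²)^{-1-1/α} = (g/β²)^{-2} (g/β²)^{1-1/α}`;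
since `1 - 1/α ≥ 0`, the second factor is at most its value `r₀^{2-2α}` at `g = b`. This leaves
the integrand `e^{-γ/g}/g²`, whose antiderivative is `e^{-γ/g}/γ`, so the integral is at most
`e^{-γ/b}/γ`, and `e^{-γ/b}` cancels the prefactor `e^{γ r₀^{2α}/β²} = e^{γ/b}`.
-/

open Real Set

theorem Real.rpow_le_rpow_add_two_div_sq {x y s : ℝ} (hx : 0 < x) (hxy : x ≤ y)
    (hs : 0 ≤ s + 2) : x ^ s ≤ y ^ (s + 2) / x ^ 2 := by
  have hsplit : x ^ s = x ^ (s + 2) / x ^ 2 := by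
    rw [rpow_add hx, rpow_two, mul_div_cancel_right₀ _ (by positivity)]
  rw [hsplit]
  gcongr

theorem hasDerivAt_exp_neg_div {γ x : ℝ} (hx : x ≠ 0) :
    HasDerivAt (fun t => exp (-γ / t)) (exp (-γ / x) * (γ / x ^ 2)) x := by
  have hinv : HasDerivAt (fun t => -γ / t) (γ / x ^ 2) x := by
    simpa [div_eq_mul_inv, neg_mul_neg] using (hasDerivAt_inv hx).const_mul (-γ)
  exact hinv.exp

theorem continuousOn_exp_neg_div_div_sq {γ : ℝ} {s : Set ℝ} (hs : ∀ x ∈ s, x ≠ 0) :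
    ContinuousOn (fun x => exp (-γ / x) / x ^ 2) s :=
  ((continuousOn_const.div continuousOn_id hs).rexp).div (continuousOn_pow 2)
    fun x hx => pow_ne_zero 2 (hs x hx)

theorem integral_exp_neg_div_div_sq {γ a b : ℝ} (hγ : γ ≠ 0) (ha : 0 < a) (hb : 0 < b) :
    ∫ x in a..b, exp (-γ / x) / x ^ 2 = (exp (-γ / b) - exp (-γ / a)) / γ := by
  have hpos : ∀ x ∈ uIcc a b, 0 < x := fun x hx =>
    lt_of_lt_of_le (lt_min ha hb) (by simpa [uIcc] using hx.1)
  have hderiv : ∀ x ∈ uIcc a b,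
      HasDerivAt (fun t => exp (-γ / t) / γ) (exp (-γ / x) / x ^ 2) x := by
    intro x hx
    have h := (hasDerivAt_exp_neg_div (γ := γ) (hpos x hx).ne').div_const γ
    rwa [mul_div_assoc, div_right_comm, div_self hγ, one_div, ← div_eq_mul_inv] at h
  have hcont := continuousOn_exp_neg_div_div_sq (γ := γ) fun x hx => (hpos x hx).ne'
  rw [intervalIntegral.integral_eq_sub_of_hasDerivAt hderiv hcont.intervalIntegrable, sub_div]

theorem integral_exp_neg_div_div_sq_le {γ a b : ℝ} (hγ : 0 < γ) (ha : 0 < a) (hb : 0 < b) :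
    ∫ x in a..b, exp (-γ / x) / x ^ 2 ≤ exp (-γ / b) / γ := by
  rw [integral_exp_neg_div_div_sq hγ.ne' ha hb]
  gcongr
  linarith [exp_pos (-γ / a)]

theorem div_sq_rpow_neg_one_sub_one_div_le {α β r₀ g : ℝ} (hα : 1 ≤ α) (hβ : β ≠ 0)
    (hr₀ : 0 < r₀) (hg : 0 < g) (hgb : g ≤ β ^ 2 * r₀ ^ (-(2 * α))) :
    (g / β ^ 2) ^ (-1 - 1 / α) ≤ β ^ 4 * r₀ ^ (2 - 2 * α) / g ^ 2 := by
  have hα0 : 0 < α := by linarith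
  have hexp : 0 ≤ -1 - 1 / α + 2 := by
    have : 1 / α ≤ 1 := (div_le_one hα0).2 hα
    linarith
  have hle : g / β ^ 2 ≤ r₀ ^ (-(2 * α)) := by
    rw [div_le_iff₀ (by positivity)]
    linarith
  have hpow : (r₀ ^ (-(2 * α))) ^ (-1 - 1 / α + 2) = r₀ ^ (2 - 2 * α) := by
    rw [← rpow_mul hr₀.le]
    congr 1
    field_simp
    ring
  calc (g / β ^ 2) ^ (-1 - 1 / α)
      ≤ (r₀ ^ (-(2 * α))) ^ (-1 - 1 / α + 2) / (g / β ^ 2) ^ 2 :=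
        rpow_le_rpow_add_two_div_sq (by positivity) hle hexp
    _ = β ^ 4 * r₀ ^ (2 - 2 * α) / g ^ 2 := by
        rw [hpow]
        field_simp

theorem exp_neg_div_mul_div_sq_rpow_le {α β p r₀ γ g : ℝ} (hα : 1 ≤ α) (hβ : β ≠ 0)
    (hr₀ : 0 < r₀) (hg : 0 < g) (hgb : g ≤ β ^ 2 * r₀ ^ (-(2 * α))) :
    exp (-γ / g) * (1 / (α * β ^ 2 * p ^ 2)) * (g / β ^ 2) ^ (-1 - 1 / α)
      ≤ β ^ 2 * r₀ ^ (2 - 2 * α) / (α * p ^ 2) * (exp (-γ / g) / g ^ 2) :=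
  calc exp (-γ / g) * (1 / (α * β ^ 2 * p ^ 2)) * (g / β ^ 2) ^ (-1 - 1 / α)
      ≤ exp (-γ / g) * (1 / (α * β ^ 2 * p ^ 2)) * (β ^ 4 * r₀ ^ (2 - 2 * α) / g ^ 2) := by
        gcongr
        exact div_sq_rpow_neg_one_sub_one_div_le hα hβ hr₀ hg hgb
    _ = β ^ 2 * r₀ ^ (2 - 2 * α) / (α * p ^ 2) * (exp (-γ / g) / g ^ 2) := by
        field_simp

theorem continuousOn_exp_neg_div_mul_div_rpow {γ c d s : ℝ} {S : Set ℝ} (hd : 0 < d)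
    (hS : ∀ x ∈ S, 0 < x) : ContinuousOn (fun x => exp (-γ / x) * c * (x / d) ^ s) S := by
  refine (((continuousOn_const.div continuousOn_id fun x hx => (hS x hx).ne').rexp).mul
    continuousOn_const).mul ((continuousOn_id.div_const _).rpow_const fun x hx => ?_)
  exact Or.inl (div_pos (hS x hx) hd).ne'

theorem integral_exp_neg_div_mul_div_rpow_le {α β p r₀ γ a : ℝ} (hα : 1 ≤ α)
    (hβ : β ≠ 0) (hr₀ : 0 < r₀) (hγ : 0 < γ) (ha : 0 < a)
    (hab : a ≤ β ^ 2 * r₀ ^ (-(2 * α))) :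
    ∫ g in a..β ^ 2 * r₀ ^ (-(2 * α)),
        exp (-γ / g) * (1 / (α * β ^ 2 * p ^ 2)) * (g / β ^ 2) ^ (-1 - 1 / α)
      ≤ β ^ 2 * r₀ ^ (2 - 2 * α) / (α * p ^ 2) *
          (exp (-γ / (β ^ 2 * r₀ ^ (-(2 * α)))) / γ) := by
  set b := β ^ 2 * r₀ ^ (-(2 * α))
  set K := β ^ 2 * r₀ ^ (2 - 2 * α) / (α * p ^ 2)
  have hpos : ∀ g ∈ uIcc a b, 0 < g := fun g hg => ha.trans_le (uIcc_of_le hab ▸ hg).1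
  have hf := (continuousOn_exp_neg_div_mul_div_rpow (γ := γ) (c := 1 / (α * β ^ 2 * p ^ 2))
    (d := β ^ 2) (s := -1 - 1 / α) (by positivity) hpos).intervalIntegrable
    (μ := MeasureTheory.volume)
  have hmajorant := ((continuousOn_exp_neg_div_div_sq (γ := γ) fun g hg =>
    (hpos g hg).ne').intervalIntegrable (μ := MeasureTheory.volume)).const_mul K
  calc ∫ g in a..b, exp (-γ / g) * (1 / (α * β ^ 2 * p ^ 2)) * (g / β ^ 2) ^ (-1 - 1 / α)
      ≤ ∫ g in a..b, K * (exp (-γ / g) / g ^ 2) :=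
        intervalIntegral.integral_mono_on hab hf hmajorant fun g hg =>
          exp_neg_div_mul_div_sq_rpow_le hα hβ hr₀ (ha.trans_le hg.1) hg.2
    _ = K * ∫ g in a..b, exp (-γ / g) / g ^ 2 := intervalIntegral.integral_const_mul _ _
    _ ≤ K * (exp (-γ / b) / γ) := by
        gcongr
        exact integral_exp_neg_div_div_sq_le hγ ha (ha.trans_le hab)

theorem stmt6_general (α β p r₀ q γ : ℝ)
    (hα : 1 < α) (hβ : 0 < β)
    (hr₀ : 0 < r₀) (hr₀q : r₀ < q) (hγ : 0 < γ) :
    Real.exp (γ * r₀ ^ (2 * α) / β ^ 2) *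
      ∫ g in (β ^ 2 * q ^ (-(2 * α)))..(β ^ 2 * r₀ ^ (-(2 * α))),
        Real.exp (-γ / g) * (1 / (α * β ^ 2 * p ^ 2)) * (g / β ^ 2) ^ (-1 - 1 / α)
      ≤ β ^ 2 * r₀ ^ (2 - 2 * α) / (α * γ * p ^ 2) := by
  have hq : 0 < q := hr₀.trans hr₀q
  have hab : β ^ 2 * q ^ (-(2 * α)) ≤ β ^ 2 * r₀ ^ (-(2 * α)) := by
    gcongr 1
    exact rpow_le_rpow_of_nonpos hr₀ hr₀q.le (by linarith)
  have hprefactor : γ * r₀ ^ (2 * α) / β ^ 2 = γ / (β ^ 2 * r₀ ^ (-(2 * α))) := by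
    rw [rpow_neg hr₀.le]
    field_simp
  calc exp (γ * r₀ ^ (2 * α) / β ^ 2) * _
      ≤ exp (γ * r₀ ^ (2 * α) / β ^ 2) * (β ^ 2 * r₀ ^ (2 - 2 * α) / (α * p ^ 2) *
          (exp (-γ / (β ^ 2 * r₀ ^ (-(2 * α)))) / γ)) := by
        gcongr
        exact integral_exp_neg_div_mul_div_rpow_le hα.le hβ.ne' hr₀ hγ (by positivity) hab
    _ = β ^ 2 * r₀ ^ (2 - 2 * α) / (α * γ * p ^ 2) := by
        rw [hprefactor, neg_div, exp_neg]
        field_simp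

/-- For `α > 1`, `β > 0`, `p > 0`, `0 < r₀ < q ≤ p` and `γ > 0`:
`e^{γ r₀^{2α}/β²} · ∫_{β² q^{-2α}}^{β² r₀^{-2α}} e^{-γ/g} (1/(αβ²p²)) (g/β²)^{-1-1/α} dg
  ≤ β² r₀^{2-2α}/(α γ p²)`. -/
theorem stmt6 (α β p r₀ q γ : ℝ)
    (hα : 1 < α) (hβ : 0 < β) (hp : 0 < p)
    (hr₀ : 0 < r₀) (hr₀q : r₀ < q) (hqp : q ≤ p) (hγ : 0 < γ) :
    Real.exp (γ * r₀ ^ (2 * α) / β ^ 2) *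
      ∫ g in (β ^ 2 * q ^ (-(2 * α)))..(β ^ 2 * r₀ ^ (-(2 * α))),
        Real.exp (-γ / g) * (1 / (α * β ^ 2 * p ^ 2)) * (g / β ^ 2) ^ (-1 - 1 / α)
      ≤ β ^ 2 * r₀ ^ (2 - 2 * α) / (α * γ * p ^ 2) :=
  stmt6_general α β p r₀ q γ hα hβ hr₀ hr₀q hγ
end

section
/- Let W, Z_1, …, Z_m be mutually independent exponential random variables with rate 1, let g > 0, let c_1, …, c_m be nonnegative reals, and let x ≥ 0. Then P( g·W/(1 + ∑_{j=1}^m c_j Z_j) ≤ x ) = 1 − e^{−x/g} · ∏_{j=1}^m (1 + c_j x/g)^{−1}. -/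
open MeasureTheory ProbabilityTheory

/-! Given the interference `S = ∑ⱼ cⱼ Zⱼ ≥ 0`, the SINR exceeds `x` exactly when
`W > x (1 + S) / g`. As `W` is exponential and independent of `S`, averaging its tail over `S`
gives `P(SINR > x) = E[e^{-x (1 + S) / g}]`, and by independence of the `Zⱼ` this Laplace
transform factors into `e^{-x/g} ∏ⱼ (1 + cⱼ x / g)⁻¹`. -/

namespace ProbabilityTheory

variable {Ω : Type*} [MeasurableSpace Ω] {P : Measure Ω}

lemma ae_nonneg_expMeasure (r : ℝ) : ∀ᵐ z ∂expMeasure r, 0 ≤ z := by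
  simp only [ae_iff, not_le]
  exact (withDensity_apply _ measurableSet_Iio).trans (lintegral_gammaPDF_of_nonpos le_rfl)

lemma expMeasure_Ioi {r t : ℝ} (hr : 0 < r) (ht : 0 ≤ t) :
    expMeasure r (Set.Ioi t) = ENNReal.ofReal (Real.exp (-(r * t))) := by
  have := isProbabilityMeasure_expMeasure hr
  have hexp_le : ENNReal.ofReal (Real.exp (-(r * t))) ≤ 1 :=
    ENNReal.ofReal_le_one.mpr (Real.exp_le_one_iff.mpr (by nlinarith))
  rw [← Set.compl_Iic, prob_compl_eq_one_sub measurableSet_Iic, ← ofReal_cdf,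
    cdf_expMeasure_eq hr, if_pos ht, ENNReal.ofReal_sub _ (Real.exp_pos _).le,
    ENNReal.ofReal_one, ENNReal.sub_sub_cancel ENNReal.one_ne_top hexp_le]

lemma lintegral_exp_neg_mul_expMeasure {r a : ℝ} (hr : 0 < r) (ha : 0 ≤ a) :
    ∫⁻ z, ENNReal.ofReal (Real.exp (-(a * z))) ∂expMeasure r
      = ENNReal.ofReal (r / (r + a)) := by
  have hra : 0 < r + a := by linarith
  have hdensity : ∀ z, exponentialPDF r z * ENNReal.ofReal (Real.exp (-(a * z)))
      = ENNReal.ofReal (r / (r + a)) * exponentialPDF (r + a) z := by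
    intro z
    -- tilting the rate-`r` density by `e^{-az}` gives a multiple of the rate-`(r + a)` density
    rw [exponentialPDF_eq, exponentialPDF_eq]
    split_ifs
    · rw [← ENNReal.ofReal_mul (by positivity), ← ENNReal.ofReal_mul (by positivity),
        ← mul_assoc, div_mul_cancel₀ _ hra.ne', mul_assoc, ← Real.exp_add]
      ring_nf
    · simp
  have hpdf (s : ℝ) : Measurable (exponentialPDF s) :=
    (measurable_exponentialPDFReal s).ennreal_ofReal
  change ∫⁻ z, _ ∂(volume.withDensity (exponentialPDF r)) = _
  rw [lintegral_withDensity_eq_lintegral_mul _ (hpdf r) (by fun_prop)]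
  change ∫⁻ z, exponentialPDF r z * _ = _
  rw [lintegral_congr hdensity, lintegral_const_mul _ (hpdf _),
    lintegral_exponentialPDF_eq_one hra, mul_one]

lemma ae_sum_mul_nonneg_of_map_eq_expMeasure {ι : Type*} [Fintype ι] {Z : ι → Ω → ℝ}
    (hmeas : ∀ j, Measurable (Z j)) {r : ℝ} (hlaw : ∀ j, P.map (Z j) = expMeasure r)
    {c : ι → ℝ} (hc : ∀ j, 0 ≤ c j) :
    ∀ᵐ ω ∂P, 0 ≤ ∑ j, c j * Z j ω := by
  have hZ0 : ∀ᵐ ω ∂P, ∀ j, 0 ≤ Z j ω := ae_all_iff.mpr fun j ↦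
    ae_of_ae_map (hmeas j).aemeasurable (hlaw j ▸ ae_nonneg_expMeasure r)
  exact hZ0.mono fun ω hω ↦ Finset.sum_nonneg fun j _ ↦ mul_nonneg (hc j) (hω j)

lemma iIndepFun.lintegral_exp_neg_sum_mul {ι : Type*} [Fintype ι] {Z : ι → Ω → ℝ}
    (hind : iIndepFun Z P) (hmeas : ∀ j, Measurable (Z j)) {r : ℝ} (hr : 0 < r)
    (hlaw : ∀ j, P.map (Z j) = expMeasure r) {a : ι → ℝ} (ha : ∀ j, 0 ≤ a j) :
    ∫⁻ ω, ENNReal.ofReal (Real.exp (-∑ j, a j * Z j ω)) ∂P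
      = ENNReal.ofReal (∏ j, r / (r + a j)) := by
  have hfactor (ω : Ω) : ENNReal.ofReal (Real.exp (-∑ j, a j * Z j ω))
      = ∏ j, ENNReal.ofReal (Real.exp (-(a j * Z j ω))) := by
    rw [← ENNReal.ofReal_prod_of_nonneg fun j _ ↦ (Real.exp_pos _).le, ← Real.exp_sum,
      Finset.sum_neg_distrib]
  have hprod := lintegral_prod_eq_prod_lintegral_of_indepFun Finset.univ
    (fun j ω ↦ ENNReal.ofReal (Real.exp (-(a j * Z j ω))))
    (hind.comp (fun j z ↦ ENNReal.ofReal (Real.exp (-(a j * z)))) fun j ↦ by fun_prop)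
    fun j ↦ by fun_prop
  rw [lintegral_congr hfactor, hprod,
    ENNReal.ofReal_prod_of_nonneg fun j _ ↦ by have := ha j; positivity]
  refine Finset.prod_congr rfl fun j _ ↦ ?_
  rw [← lintegral_exp_neg_mul_expMeasure hr (ha j), ← hlaw j,
    lintegral_map (by fun_prop) (hmeas j)]

lemma iIndepFun.indepFun_fin_cons {β : Type*} [MeasurableSpace β] {m : ℕ} {W : Ω → β}
    {Z : Fin m → Ω → β} (h : iIndepFun (Fin.cons W Z : Fin (m + 1) → Ω → β) P)
    (hW : Measurable W) (hZ : ∀ j, Measurable (Z j)) :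
    IndepFun W (fun ω j ↦ Z j ω) P := by
  have hdisj : Disjoint {0} (Finset.univ.map (Fin.succEmb m)) := by simp
  exact (h.indepFun_finset _ _ hdisj (Fin.cases hW hZ)).comp
    (measurable_pi_apply ⟨0, Finset.mem_singleton_self 0⟩)
    (measurable_pi_lambda _ fun j : Fin m ↦ measurable_pi_apply ⟨j.succ, by simp⟩)

lemma IndepFun.measure_lt_eq_lintegral [IsFiniteMeasure P] {T W : Ω → ℝ} (h : IndepFun T W P)
    (hT : Measurable T) (hW : Measurable W) :
    P {ω | T ω < W ω} = ∫⁻ ω, P.map W (Set.Ioi (T ω)) ∂P := by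
  have hlt : MeasurableSet {p : ℝ × ℝ | p.1 < p.2} :=
    measurableSet_lt measurable_fst measurable_snd
  change P ((fun ω ↦ (T ω, W ω)) ⁻¹' {p | p.1 < p.2}) = _
  rw [← Measure.map_apply (hT.prodMk hW) hlt,
    (indepFun_iff_map_prod_eq_prod_map_map hT.aemeasurable hW.aemeasurable).mp h,
    Measure.prod_apply hlt, lintegral_map (measurable_measure_prodMk_left hlt) hT]
  rfl

lemma IndepFun.measure_lt_of_map_eq_expMeasure [IsFiniteMeasure P] {T W : Ω → ℝ}
    (h : IndepFun T W P) (hT : Measurable T) (hW : Measurable W) {r : ℝ} (hr : 0 < r)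
    (hlaw : P.map W = expMeasure r) (hT0 : ∀ᵐ ω ∂P, 0 ≤ T ω) :
    P {ω | T ω < W ω} = ∫⁻ ω, ENNReal.ofReal (Real.exp (-(r * T ω))) ∂P := by
  rw [h.measure_lt_eq_lintegral hT hW, hlaw]
  exact lintegral_congr_ae (hT0.mono fun ω hω ↦ expMeasure_Ioi hr hω)

lemma measure_le_mul_one_add_sum_of_map_eq_expMeasure [IsProbabilityMeasure P] {m : ℕ}
    {W : Ω → ℝ} {Z : Fin m → Ω → ℝ} (hW : Measurable W) (hZ : ∀ j, Measurable (Z j))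
    (hindep : iIndepFun (Fin.cons W Z : Fin (m + 1) → Ω → ℝ) P)
    (hWlaw : P.map W = expMeasure 1) (hZlaw : ∀ j, P.map (Z j) = expMeasure 1)
    {c : Fin m → ℝ} (hc : ∀ j, 0 ≤ c j) {t : ℝ} (ht : 0 ≤ t) :
    P {ω | W ω ≤ t * (1 + ∑ j, c j * Z j ω)}
      = 1 - ENNReal.ofReal (Real.exp (-t) * ∏ j, (1 + c j * t)⁻¹) := by
  set T : Ω → ℝ := fun ω ↦ t * (1 + ∑ j, c j * Z j ω) with hT_def
  have hTmeas : Measurable T := by fun_prop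
  have hT0 : ∀ᵐ ω ∂P, 0 ≤ T ω := (ae_sum_mul_nonneg_of_map_eq_expMeasure hZ hZlaw hc).mono
    fun ω hω ↦ mul_nonneg ht (by linarith)
  have hTW : IndepFun T W P := ((hindep.indepFun_fin_cons hW hZ).comp measurable_id
    (by fun_prop : Measurable fun v : Fin m → ℝ ↦ t * (1 + ∑ j, c j * v j))).symm
  have hZind : iIndepFun Z P := hindep.precomp (g := Fin.succ) (Fin.succ_injective m)
  have hexp (ω : Ω) : ENNReal.ofReal (Real.exp (-(1 * T ω)))
      = ENNReal.ofReal (Real.exp (-t)) * ENNReal.ofReal (Real.exp (-∑ j, c j * t * Z j ω)) := by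
    rw [← ENNReal.ofReal_mul (Real.exp_pos _).le, ← Real.exp_add]
    simp only [hT_def, one_mul, mul_add, mul_one, Finset.mul_sum, mul_assoc, mul_left_comm t,
      neg_add]
  calc P {ω | W ω ≤ T ω}
      = 1 - P {ω | T ω < W ω} := by
        rw [← prob_compl_eq_one_sub (measurableSet_lt hTmeas hW)]
        simp only [Set.compl_ofPred, not_lt]
    _ = 1 - ENNReal.ofReal (Real.exp (-t) * ∏ j, (1 + c j * t)⁻¹) := by
        rw [hTW.measure_lt_of_map_eq_expMeasure hTmeas hW one_pos hWlaw hT0,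
          lintegral_congr hexp, lintegral_const_mul _ (by fun_prop),
          hZind.lintegral_exp_neg_sum_mul hZ one_pos hZlaw fun j ↦ mul_nonneg (hc j) ht,
          ← ENNReal.ofReal_mul (Real.exp_pos _).le]
        simp only [one_div]

end ProbabilityTheory

/-- If `W, Z 0, …, Z (m-1)` are mutually independent exponential
(rate 1) random variables, `g > 0`, `c j ≥ 0`, and `x ≥ 0`, then
`P(g·W/(1 + ∑ⱼ cⱼ Zⱼ) ≤ x) = 1 - e^{-x/g} ∏ⱼ (1 + cⱼ x/g)⁻¹`. -/
theorem stmt11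
    {Ω : Type*} [MeasurableSpace Ω] (P : Measure Ω) [IsProbabilityMeasure P]
    (m : ℕ) (W : Ω → ℝ) (Z : Fin m → Ω → ℝ)
    (hWmeas : Measurable W) (hZmeas : ∀ j, Measurable (Z j))
    (hindep : iIndepFun (Fin.cons W Z : Fin (m + 1) → Ω → ℝ) P)
    (hW : Measure.map W P = expMeasure 1)
    (hZ : ∀ j, Measure.map (Z j) P = expMeasure 1)
    (g : ℝ) (hg : 0 < g) (c : Fin m → ℝ) (hc : ∀ j, 0 ≤ c j)
    (x : ℝ) (hx : 0 ≤ x) :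
    P {ω | g * W ω / (1 + ∑ j, c j * Z j ω) ≤ x}
      = ENNReal.ofReal (1 - Real.exp (-x / g) * ∏ j, (1 + c j * x / g)⁻¹) := by
  have hevent : {ω | g * W ω / (1 + ∑ j, c j * Z j ω) ≤ x}
      =ᵐ[P] {ω | W ω ≤ x / g * (1 + ∑ j, c j * Z j ω)} := by
    rw [Filter.eventuallyEq_set]
    filter_upwards [ae_sum_mul_nonneg_of_map_eq_expMeasure hZmeas hZ hc] with ω hω
    rw [div_le_iff₀ (by positivity), div_mul_eq_mul_div, le_div_iff₀' hg]
  have hprod : 0 ≤ ∏ j, (1 + c j * x / g)⁻¹ :=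
    Finset.prod_nonneg fun j _ ↦ by have := hc j; positivity
  rw [measure_congr hevent,
    measure_le_mul_one_add_sum_of_map_eq_expMeasure hWmeas hZmeas hindep hW hZ hc
      (div_nonneg hx hg.le),
    ← ENNReal.ofReal_one, neg_div, ENNReal.ofReal_sub _ (mul_nonneg (Real.exp_pos _).le hprod)]
  simp only [mul_div_assoc]
end

section
/- Let κ > 0, θ > 0, let b_1, …, b_m be nonnegative reals, and for c > 0 define g_c(x) = e^{x/κ} · ∏_{j=1}^m (1 + b_j x / c^{θ}) for x ≥ 0. Let 0 < c_1 ≤ c_2 and suppose x_1 ≥ 0 and x_2 ≥ 0 satisfy g_{c_1}(x_1) = g_{c_2}(x_2). Then x_2 ≤ (c_2/c_1)^{θ} · x_1. -/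
open Real

/-- **Statement 12.** With `g_c(x) = e^{x/κ} ∏ⱼ (1 + bⱼ x / c^θ)`, if `0 < c₁ ≤ c₂`,
`x₁, x₂ ≥ 0` and `g_{c₁}(x₁) = g_{c₂}(x₂)`, then `x₂ ≤ (c₂/c₁)^θ · x₁`. -/
theorem stmt13 (κ θ : ℝ) (hκ : 0 < κ) (hθ : 0 < θ)
    (m : ℕ) (b : Fin m → ℝ) (hb : ∀ j, 0 ≤ b j)
    (c₁ c₂ : ℝ) (hc₁ : 0 < c₁) (hc₁₂ : c₁ ≤ c₂)
    (x₁ x₂ : ℝ) (hx₁ : 0 ≤ x₁) (hx₂ : 0 ≤ x₂)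
    (heq : Real.exp (x₁ / κ) * ∏ j, (1 + b j * x₁ / c₁ ^ θ)
         = Real.exp (x₂ / κ) * ∏ j, (1 + b j * x₂ / c₂ ^ θ)) :
    x₂ ≤ (c₂ / c₁) ^ θ * x₁ := by
  by_contra h
  push_neg at h
  set r := (c₂ / c₁) ^ θ with hr
  have hc₂ : 0 < c₂ := lt_of_lt_of_le hc₁ hc₁₂
  have hr1 : 1 ≤ r := Real.one_le_rpow (by rwa [le_div_iff₀ hc₁, one_mul]) hθ.le
  have hc1p : 0 < c₁ ^ θ := Real.rpow_pos_of_pos hc₁ θ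
  have hc2p : 0 < c₂ ^ θ := Real.rpow_pos_of_pos hc₂ θ
  have hrx1 : 0 ≤ r * x₁ := mul_nonneg (le_trans zero_le_one hr1) hx₁
  have hrx : ∀ j, b j * (r * x₁) / c₂ ^ θ = b j * x₁ / c₁ ^ θ := by
    intro j
    rw [hr, Real.div_rpow hc₂.le hc₁.le]
    field_simp
  have hx1r : x₁ ≤ r * x₁ := le_mul_of_one_le_left hx₁ hr1
  have key : Real.exp (x₁ / κ) * ∏ j, (1 + b j * x₁ / c₁ ^ θ)
      ≤ Real.exp (r * x₁ / κ) * ∏ j, (1 + b j * (r * x₁) / c₂ ^ θ) := by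
    have hprod : ∏ j, (1 + b j * (r * x₁) / c₂ ^ θ) = ∏ j, (1 + b j * x₁ / c₁ ^ θ) :=
      Finset.prod_congr rfl fun j _ => by rw [hrx j]
    rw [hprod]
    refine mul_le_mul_of_nonneg_right (Real.exp_le_exp.mpr (by gcongr)) ?_
    · refine Finset.prod_nonneg fun j _ => ?_
      have : 0 ≤ b j * x₁ / c₁ ^ θ := div_nonneg (mul_nonneg (hb j) hx₁) hc1p.le
      linarith
  have hppos : 0 < ∏ j, (1 + b j * (r * x₁) / c₂ ^ θ) := by
    refine Finset.prod_pos fun j _ => ?_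
    have : 0 ≤ b j * (r * x₁) / c₂ ^ θ := div_nonneg (mul_nonneg (hb j) hrx1) hc2p.le
    linarith
  have strict : Real.exp (r * x₁ / κ) * ∏ j, (1 + b j * (r * x₁) / c₂ ^ θ)
      < Real.exp (x₂ / κ) * ∏ j, (1 + b j * x₂ / c₂ ^ θ) := by
    have h1 : Real.exp (r * x₁ / κ) < Real.exp (x₂ / κ) := by
      apply Real.exp_lt_exp.mpr
      gcongr
    have h2 : ∏ j, (1 + b j * (r * x₁) / c₂ ^ θ) ≤ ∏ j, (1 + b j * x₂ / c₂ ^ θ) := by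
      refine Finset.prod_le_prod (fun j _ => ?_) (fun j _ => ?_)
      · have : 0 ≤ b j * (r * x₁) / c₂ ^ θ := div_nonneg (mul_nonneg (hb j) hrx1) hc2p.le
        linarith
      · gcongr
        exact hb j
    exact mul_lt_mul h1 h2 hppos (Real.exp_pos _).le
  exact absurd heq (ne_of_lt (key.trans_lt strict))
end

section
/- Fix integers B ≥ 1 and N ≥ 1 and reals P̄ > 0, κ > 0, θ > 0, r_0 > 0, and A > 1. For c > 0, define OP(c) as the supremum of ∑_{i=1}^B ∑_{n=1}^N log(1 + p_{i,n} x_{i,n}) over all families (p_{i,n})_{i≤B, n≤N} and (x_{i,n})_{i≤B, n≤N} of nonnegative reals satisfying ∑_{n=1}^N p_{i,n} ≤ P̄ for every i, and, for every pair (i,n), A = e^{x_{i,n}/κ} · ∏_{j ≠ i} (1 + p_{j,n} x_{i,n} (r_0/c)^{θ}). Then for all 0 < c_1 ≤ c_2: OP(c_1) ≤ OP(c_2) ≤ (c_2/c_1)^{θ} · OP(c_1). -/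
open Real

private lemma log_one_add_mul_le' {t lam : ℝ} (ht : 0 ≤ t) (hlam : 1 ≤ lam) :
    Real.log (1 + lam * t) ≤ lam * Real.log (1 + t) := by
  have h1 : (0:ℝ) < 1 + t := by linarith
  have h2 : (0:ℝ) < 1 + lam * t := by nlinarith
  have hb : 1 + lam * t ≤ (1 + t) ^ lam :=
    one_add_mul_self_le_rpow_one_add (by linarith) hlam
  calc Real.log (1 + lam * t) ≤ Real.log ((1 + t) ^ lam) := Real.log_le_log h2 hb
    _ = lam * Real.log (1 + t) := Real.log_rpow h1 lam

private lemma ivt_sol' {ι : Type*} (s : Finset ι) (κ A ρ : ℝ) (q : ι → ℝ)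
    (a b : ℝ) (hab : a ≤ b)
    (h1 : Real.exp (a / κ) * ∏ j ∈ s, (1 + q j * a * ρ) ≤ A)
    (h2 : A ≤ Real.exp (b / κ) * ∏ j ∈ s, (1 + q j * b * ρ)) :
    ∃ t ∈ Set.Icc a b, A = Real.exp (t / κ) * ∏ j ∈ s, (1 + q j * t * ρ) := by
  have hcont : ContinuousOn
      (fun t : ℝ => Real.exp (t / κ) * ∏ j ∈ s, (1 + q j * t * ρ)) (Set.Icc a b) := by
    apply Continuous.continuousOn
    exact (Real.continuous_exp.comp (continuous_id.div_const κ)).mul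
      (continuous_finset_prod s fun j _ => by continuity)
  obtain ⟨t, ht, hft⟩ := intermediate_value_Icc hab hcont ⟨h1, h2⟩
  exact ⟨t, ht, hft.symm⟩

set_option maxHeartbeats 1000000 in
/-- For `c > 0`, `OP c` is the supremum of
`∑ᵢ∑ₙ log(1 + pᵢₙ xᵢₙ)` over nonnegative `(pᵢₙ)`, `(xᵢₙ)` with `∑ₙ pᵢₙ ≤ P̄` for each `i`
and `A = e^{xᵢₙ/κ} ∏_{j≠i} (1 + pⱼₙ xᵢₙ (r₀/c)^θ)` for each `(i,n)`.
Then for `0 < c₁ ≤ c₂`: `OP c₁ ≤ OP c₂ ≤ (c₂/c₁)^θ · OP c₁`. -/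
theorem stmt14 (B N : ℕ) (hB : 1 ≤ B) (hN : 1 ≤ N)
    (Pbar κ θ r₀ A : ℝ)
    (hPbar : 0 < Pbar) (hκ : 0 < κ) (hθ : 0 < θ) (hr₀ : 0 < r₀) (hA : 1 < A)
    (OP : ℝ → ℝ)
    (hOP : ∀ c, 0 < c → OP c =
      sSup { v : ℝ | ∃ p x : Fin B → Fin N → ℝ,
        (∀ i n, 0 ≤ p i n) ∧ (∀ i n, 0 ≤ x i n) ∧
        (∀ i, ∑ n, p i n ≤ Pbar) ∧
        (∀ i n, A = Real.exp (x i n / κ) *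
          ∏ j ∈ Finset.univ.erase i, (1 + p j n * x i n * (r₀ / c) ^ θ)) ∧
        v = ∑ i, ∑ n, Real.log (1 + p i n * x i n) })
    (c₁ c₂ : ℝ) (hc₁ : 0 < c₁) (hc₁₂ : c₁ ≤ c₂) :
    OP c₁ ≤ OP c₂ ∧ OP c₂ ≤ (c₂ / c₁) ^ θ * OP c₁ := by
  have hc₂ : 0 < c₂ := lt_of_lt_of_le hc₁ hc₁₂
  have hA0 : (0:ℝ) < A := by linarith
  have hlogA : 0 ≤ Real.log A := Real.log_nonneg hA.le
  set S : ℝ → Set ℝ := fun c => { v : ℝ | ∃ p x : Fin B → Fin N → ℝ,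
        (∀ i n, 0 ≤ p i n) ∧ (∀ i n, 0 ≤ x i n) ∧
        (∀ i, ∑ n, p i n ≤ Pbar) ∧
        (∀ i n, A = Real.exp (x i n / κ) *
          ∏ j ∈ Finset.univ.erase i, (1 + p j n * x i n * (r₀ / c) ^ θ)) ∧
        v = ∑ i, ∑ n, Real.log (1 + p i n * x i n) } with hS
  have e₁ : OP c₁ = sSup (S c₁) := hOP c₁ hc₁
  have e₂ : OP c₂ = sSup (S c₂) := hOP c₂ hc₂
  -- notation
  set ρ₁ : ℝ := (r₀ / c₁) ^ θ with hρ₁def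
  set ρ₂ : ℝ := (r₀ / c₂) ^ θ with hρ₂def
  set lam : ℝ := (c₂ / c₁) ^ θ with hlamdef
  have hρ₂0 : 0 ≤ ρ₂ := Real.rpow_nonneg (by positivity) _
  have hρ₁0 : 0 ≤ ρ₁ := Real.rpow_nonneg (by positivity) _
  have hρ21 : ρ₂ ≤ ρ₁ := by
    apply Real.rpow_le_rpow (by positivity) ?_ hθ.le
    gcongr
  have hlam1 : 1 ≤ lam := by
    rw [hlamdef, show (1:ℝ) = 1 ^ θ from (Real.one_rpow θ).symm]
    exact Real.rpow_le_rpow zero_le_one ((one_le_div hc₁).2 hc₁₂) hθ.le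
  have hlam0 : 0 < lam := by linarith
  have hmul : lam * ρ₂ = ρ₁ := by
    rw [hlamdef, hρ₂def, hρ₁def, ← Real.mul_rpow (by positivity) (by positivity)]
    congr 1
    field_simp
  -- boundedness of S c for any c with 0 < c
  have hbdd : ∀ c : ℝ, 0 < c → BddAbove (S c) := by
    intro c hc
    refine ⟨(B * N : ℕ) * Real.log (1 + Pbar * (κ * Real.log A)), ?_⟩
    rintro v ⟨p, x, hp, hx, hsum, hcon, rfl⟩
    have hρ : 0 ≤ (r₀ / c) ^ θ := Real.rpow_nonneg (by positivity) _
    have hxb : ∀ i n, x i n ≤ κ * Real.log A := by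
      intro i n
      have hprod : 1 ≤ ∏ j ∈ Finset.univ.erase i, (1 + p j n * x i n * (r₀ / c) ^ θ) := by
        have h1 : (1:ℝ) = ∏ _j ∈ Finset.univ.erase i, (1:ℝ) := by simp
        rw [h1]
        apply Finset.prod_le_prod
        · intro j _; norm_num
        · intro j _
          have := mul_nonneg (mul_nonneg (hp j n) (hx i n)) hρ
          linarith
      have hA' : Real.exp (x i n / κ) ≤ A := by
        have h0 : 0 < Real.exp (x i n / κ) := Real.exp_pos _
        nlinarith [hcon i n]
      have hAl : Real.exp (x i n / κ) ≤ Real.exp (Real.log A) := by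
        rwa [Real.exp_log hA0]
      have hdiv : x i n / κ ≤ Real.log A := Real.exp_le_exp.mp hAl
      calc x i n = κ * (x i n / κ) := by field_simp
        _ ≤ κ * Real.log A := by nlinarith
    have hpb : ∀ i n, p i n ≤ Pbar := fun i n =>
      le_trans (Finset.single_le_sum (fun m _ => hp i m) (Finset.mem_univ n)) (hsum i)
    have hterm : ∀ i n, Real.log (1 + p i n * x i n) ≤ Real.log (1 + Pbar * (κ * Real.log A)) := by
      intro i n
      apply Real.log_le_log (by nlinarith [hp i n, hx i n])
      have := mul_le_mul (hpb i n) (hxb i n) (hx i n) hPbar.le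
      linarith
    calc ∑ i, ∑ n, Real.log (1 + p i n * x i n)
        ≤ ∑ i : Fin B, ∑ n : Fin N, Real.log (1 + Pbar * (κ * Real.log A)) :=
          Finset.sum_le_sum fun i _ => Finset.sum_le_sum fun n _ => hterm i n
      _ = (B * N : ℕ) * Real.log (1 + Pbar * (κ * Real.log A)) := by
          simp [Finset.sum_const, Finset.card_univ, nsmul_eq_mul]; ring
  -- 0 ∈ S c for any c
  have hmem0 : ∀ c : ℝ, (0:ℝ) ∈ S c := by
    intro c
    refine ⟨fun _ _ => 0, fun _ _ => κ * Real.log A, fun _ _ => le_refl 0,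
      fun _ _ => by positivity, ?_, ?_, ?_⟩
    · intro i; simp; linarith
    · intro i n
      have h : κ * Real.log A / κ = Real.log A := mul_div_cancel_left₀ _ hκ.ne'
      simp [h, Real.exp_log hA0]
    · simp
  have hSup₁0 : 0 ≤ sSup (S c₁) := le_csSup (hbdd c₁ hc₁) (hmem0 c₁)
  have hSup₂0 : 0 ≤ sSup (S c₂) := le_csSup (hbdd c₂ hc₂) (hmem0 c₂)
  rw [e₁, e₂]
  constructor
  · -- OP c₁ ≤ OP c₂
    apply Real.sSup_le _ hSup₂0
    rintro v ⟨p, x, hp, hx, hsum, hcon, rfl⟩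
    -- build x' for c₂
    have hEx : ∀ i n, ∃ t, (x i n ≤ t ∧ t ≤ lam * x i n) ∧
        A = Real.exp (t / κ) *
          ∏ j ∈ Finset.univ.erase i, (1 + p j n * t * ρ₂) := by
      intro i n
      have hab : x i n ≤ lam * x i n := by nlinarith [hx i n]
      have h1 : Real.exp (x i n / κ) *
          ∏ j ∈ Finset.univ.erase i, (1 + p j n * x i n * ρ₂) ≤ A := by
        rw [hcon i n]
        apply mul_le_mul_of_nonneg_left _ (Real.exp_pos _).le
        apply Finset.prod_le_prod
        · intro j _
          have := mul_nonneg (mul_nonneg (hp j n) (hx i n)) hρ₂0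
          linarith
        · intro j _
          have := mul_le_mul_of_nonneg_left hρ21 (mul_nonneg (hp j n) (hx i n))
          nlinarith
      have h2 : A ≤ Real.exp ((lam * x i n) / κ) *
          ∏ j ∈ Finset.univ.erase i, (1 + p j n * (lam * x i n) * ρ₂) := by
        have hpe : ∀ j, (1 : ℝ) + p j n * (lam * x i n) * ρ₂
            = 1 + p j n * x i n * ρ₁ := by
          intro j; rw [← hmul]; ring
        rw [Finset.prod_congr rfl fun j _ => hpe j, hcon i n]
        apply mul_le_mul_of_nonneg_right
        · exact Real.exp_le_exp.mpr ((div_le_div_iff_of_pos_right hκ).mpr hab)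
        · refine Finset.prod_nonneg fun j _ => ?_
          have := mul_nonneg (mul_nonneg (hp j n) (hx i n)) hρ₁0
          linarith
      obtain ⟨t, ht, hft⟩ := ivt_sol' _ κ A ρ₂ (fun j => p j n) _ _ hab h1 h2
      exact ⟨t, ⟨ht.1, ht.2⟩, hft⟩
    choose x' hx'b hx'c using hEx
    have hx'0 : ∀ i n, 0 ≤ x' i n := fun i n => le_trans (hx i n) (hx'b i n).1
    have hmem : (∑ i, ∑ n, Real.log (1 + p i n * x' i n)) ∈ S c₂ :=
      ⟨p, x', hp, hx'0, hsum, fun i n => hx'c i n, rfl⟩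
    calc ∑ i, ∑ n, Real.log (1 + p i n * x i n)
        ≤ ∑ i, ∑ n, Real.log (1 + p i n * x' i n) := by
          apply Finset.sum_le_sum; intro i _
          apply Finset.sum_le_sum; intro n _
          apply Real.log_le_log (by nlinarith [hp i n, hx i n])
          nlinarith [hp i n, (hx'b i n).1]
      _ ≤ sSup (S c₂) := le_csSup (hbdd c₂ hc₂) hmem
  · -- OP c₂ ≤ lam * OP c₁
    apply Real.sSup_le _ (by positivity)
    rintro w ⟨p, y, hp, hy, hsum, hcon, rfl⟩
    -- build x' for c₁ with y/lam ≤ x' ≤ y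
    have hEx : ∀ i n, ∃ t, (y i n / lam ≤ t ∧ t ≤ y i n) ∧
        A = Real.exp (t / κ) *
          ∏ j ∈ Finset.univ.erase i, (1 + p j n * t * ρ₁) := by
      intro i n
      have hab : y i n / lam ≤ y i n := by
        rw [div_le_iff₀ hlam0]; nlinarith [hy i n]
      have h1 : Real.exp ((y i n / lam) / κ) *
          ∏ j ∈ Finset.univ.erase i, (1 + p j n * (y i n / lam) * ρ₁) ≤ A := by
        have hpe : ∀ j, (1 : ℝ) + p j n * (y i n / lam) * ρ₁
            = 1 + p j n * y i n * ρ₂ := by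
          intro j; rw [← hmul]; field_simp
        rw [Finset.prod_congr rfl fun j _ => hpe j, hcon i n]
        apply mul_le_mul_of_nonneg_right
        · exact Real.exp_le_exp.mpr ((div_le_div_iff_of_pos_right hκ).mpr hab)
        · refine Finset.prod_nonneg fun j _ => ?_
          have := mul_nonneg (mul_nonneg (hp j n) (hy i n)) hρ₂0
          linarith
      have h2 : A ≤ Real.exp (y i n / κ) *
          ∏ j ∈ Finset.univ.erase i, (1 + p j n * y i n * ρ₁) := by
        rw [hcon i n]
        apply mul_le_mul_of_nonneg_left _ (Real.exp_pos _).le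
        apply Finset.prod_le_prod
        · intro j _
          have := mul_nonneg (mul_nonneg (hp j n) (hy i n)) hρ₂0
          linarith
        · intro j _
          have := mul_le_mul_of_nonneg_left hρ21 (mul_nonneg (hp j n) (hy i n))
          nlinarith
      obtain ⟨t, ht, hft⟩ := ivt_sol' _ κ A ρ₁ (fun j => p j n) _ _ hab h1 h2
      exact ⟨t, ⟨ht.1, ht.2⟩, hft⟩
    choose x' hx'b hx'c using hEx
    have hx'0 : ∀ i n, 0 ≤ x' i n := by
      intro i n
      have h0 : 0 ≤ y i n / lam := div_nonneg (hy i n) hlam0.le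
      linarith [(hx'b i n).1]
    have hmem : (∑ i, ∑ n, Real.log (1 + p i n * x' i n)) ∈ S c₁ :=
      ⟨p, x', hp, hx'0, hsum, fun i n => hx'c i n, rfl⟩
    calc ∑ i, ∑ n, Real.log (1 + p i n * y i n)
        ≤ ∑ i, ∑ n, lam * Real.log (1 + p i n * x' i n) := by
          apply Finset.sum_le_sum; intro i _
          apply Finset.sum_le_sum; intro n _
          have hle : p i n * y i n ≤ lam * (p i n * x' i n) := by
            have h1 : y i n ≤ lam * x' i n := by
              have := (hx'b i n).1
              rw [div_le_iff₀ hlam0] at this; linarith [this]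
            nlinarith [hp i n]
          calc Real.log (1 + p i n * y i n)
              ≤ Real.log (1 + lam * (p i n * x' i n)) := by
                apply Real.log_le_log (by nlinarith [hp i n, hy i n]) (by linarith)
            _ ≤ lam * Real.log (1 + p i n * x' i n) :=
                log_one_add_mul_le' (mul_nonneg (hp i n) (hx'0 i n)) hlam1
      _ = lam * ∑ i, ∑ n, Real.log (1 + p i n * x' i n) := by
          rw [Finset.mul_sum]; apply Finset.sum_congr rfl; intro i _; rw [Finset.mul_sum]
      _ ≤ lam * sSup (S c₁) := by
          apply mul_le_mul_of_nonneg_left (le_csSup (hbdd c₁ hc₁) hmem) hlam0.le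
end

section
/- Let α > 1, β > 0, p > 0, 0 < r_0 < q ≤ p, and m > 0, w > 0. Define for γ > 0: T_1(γ) = ∫_{β² q^{−2α}}^{β² r_0^{−2α}} (m/(w g))^{m−1} · e^{−(mγ/w)(1/g − r_0^{2α}/β²)} · (1/(α β² p²)) · (g/β²)^{−1−1/α} dg. Then T_1(γ) tends to 0 as γ → ∞. -/
open Real Filter MeasureTheory Topology Set

/-!
Dominated convergence. On the range of integration `g ≤ β² r₀^{-2α}`, so the exponent
`-(mγ/w)(1/g - r₀^{2α}/β²)` is `-γ` times a nonnegative function, vanishing only at the upper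
endpoint. The exponential factor is therefore bounded by `1` and tends to `0` almost everywhere,
while the remaining factor is continuous on the compact range of integration, inside `(0, ∞)`.
-/

theorem tendsto_integral_mul_exp_neg_mul_atTop {X : Type*} [MeasurableSpace X] {μ : Measure X}
    {f φ : X → ℝ} (hf : Integrable f μ) (hφ : AEMeasurable φ μ) (hpos : ∀ᵐ x ∂μ, 0 < φ x) :
    Tendsto (fun γ : ℝ => ∫ x, f x * exp (-(γ * φ x)) ∂μ) atTop (𝓝 0) := by
  have hmeas : ∀ γ : ℝ, AEStronglyMeasurable (fun x => f x * exp (-(γ * φ x))) μ := fun γ =>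
    hf.aestronglyMeasurable.mul
      (continuous_exp.measurable.comp_aemeasurable (hφ.const_mul γ).neg).aestronglyMeasurable
  have hbound : ∀ᶠ γ : ℝ in atTop, ∀ᵐ x ∂μ, ‖f x * exp (-(γ * φ x))‖ ≤ ‖f x‖ := by
    filter_upwards [eventually_ge_atTop 0] with γ hγ
    filter_upwards [hpos] with x hx
    rw [norm_mul, norm_of_nonneg (exp_pos _).le]
    exact mul_le_of_le_one_right (norm_nonneg _)
      (exp_le_one_iff.mpr (neg_nonpos.mpr (mul_nonneg hγ hx.le)))
  have hlim : ∀ᵐ x ∂μ, Tendsto (fun γ : ℝ => f x * exp (-(γ * φ x))) atTop (𝓝 0) := by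
    filter_upwards [hpos] with x hx
    simpa using tendsto_const_nhds.mul (tendsto_exp_atBot.comp
      (tendsto_neg_atTop_atBot.comp (tendsto_id.atTop_mul_const hx)))
  simpa using tendsto_integral_filter_of_dominated_convergence (fun x => ‖f x‖)
    (Eventually.of_forall hmeas) hbound hf.norm hlim

theorem stmt16_general (α β p r₀ q m w : ℝ)
    (hα : 1 < α) (hβ : 0 < β)
    (hr₀ : 0 < r₀) (hr₀q : r₀ < q)
    (hm : 0 < m) (hw : 0 < w) :
    Tendsto (fun γ : ℝ =>
        ∫ g in (β ^ 2 * q ^ (-(2 * α)))..(β ^ 2 * r₀ ^ (-(2 * α))),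
          (m / (w * g)) ^ (m - 1) *
            Real.exp (-(m * γ / w) * (1 / g - r₀ ^ (2 * α) / β ^ 2)) *
            (1 / (α * β ^ 2 * p ^ 2)) * (g / β ^ 2) ^ (-1 - 1 / α))
      atTop (nhds 0) := by
  set a := β ^ 2 * q ^ (-(2 * α))
  set b := β ^ 2 * r₀ ^ (-(2 * α))
  have ha : 0 < a := by have := hr₀.trans hr₀q; positivity
  have hab : a ≤ b := mul_le_mul_of_nonneg_left
    (rpow_lt_rpow_of_neg hr₀ hr₀q (by linarith)).le (by positivity)
  have hb_inv : r₀ ^ (2 * α) / β ^ 2 = 1 / b := by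
    have : 0 < r₀ ^ (2 * α) := by positivity
    simp only [b, rpow_neg hr₀.le]
    field_simp
  have hf : IntegrableOn (fun g => (m / (w * g)) ^ (m - 1) * (1 / (α * β ^ 2 * p ^ 2)) *
      (g / β ^ 2) ^ (-1 - 1 / α)) (Ioo a b) := by
    have hcont : ContinuousOn (fun g => (m / (w * g)) ^ (m - 1) * (1 / (α * β ^ 2 * p ^ 2)) *
        (g / β ^ 2) ^ (-1 - 1 / α)) (Icc a b) := by
      refine fun g hg => ContinuousAt.continuousWithinAt ?_
      have hg : 0 < g := ha.trans_le hg.1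
      fun_prop (disch := first | positivity | exact Or.inl (by positivity))
    exact hcont.integrableOn_Icc.mono_set Ioo_subset_Icc_self
  have hpos : ∀ᵐ g ∂volume.restrict (Ioo a b), 0 < m / w * (1 / g - r₀ ^ (2 * α) / β ^ 2) :=
    ae_restrict_of_forall_mem measurableSet_Ioo fun g hg => by
      have := one_div_lt_one_div_of_lt (ha.trans hg.1) hg.2
      rw [hb_inv]
      exact mul_pos (by positivity) (by linarith)
  refine (tendsto_integral_mul_exp_neg_mul_atTop hf (by fun_prop) hpos).congr fun γ => ?_
  rw [intervalIntegral.integral_of_le hab, integral_Ioc_eq_integral_Ioo]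
  congr 1
  ext g
  rw [show ∀ c, -(m * γ / w) * c = -(γ * (m / w * c)) from fun c => by ring]
  ring

/-- Nakagami-`(m,w)` tail contribution: for `α > 1`, `β > 0`, `p > 0`,
`0 < r₀ < q ≤ p`, `m > 0`, `w > 0`, the quantity
`T₁(γ) = ∫_{β² q^{-2α}}^{β² r₀^{-2α}} (m/(w g))^{m-1}
  e^{-(mγ/w)(1/g - r₀^{2α}/β²)} (1/(αβ²p²)) (g/β²)^{-1-1/α} dg`
tends to `0` as `γ → ∞`. -/
theorem stmt16 (α β p r₀ q m w : ℝ)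
    (hα : 1 < α) (hβ : 0 < β) (hp : 0 < p)
    (hr₀ : 0 < r₀) (hr₀q : r₀ < q) (hqp : q ≤ p)
    (hm : 0 < m) (hw : 0 < w) :
    Tendsto (fun γ : ℝ =>
        ∫ g in (β ^ 2 * q ^ (-(2 * α)))..(β ^ 2 * r₀ ^ (-(2 * α))),
          (m / (w * g)) ^ (m - 1) *
            Real.exp (-(m * γ / w) * (1 / g - r₀ ^ (2 * α) / β ^ 2)) *
            (1 / (α * β ^ 2 * p ^ 2)) * (g / β ^ 2) ^ (-1 - 1 / α))
      atTop (nhds 0) :=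
  stmt16_general α β p r₀ q m w hα hβ hr₀ hr₀q hm hw
end

section
/- Let α > 1, β > 0, p > 0, 0 < r_0 < q ≤ p, w > 0, and a ∈ ℝ. Set κ = β² r_0^{−2α}. Define for all sufficiently large γ > 0 (so that log(γ/g) − 2a > 0 for all g in the integration range): L(γ) = (log(γ/κ) − 2a) · exp( ((log(γ/κ) − 2a)/√(8w))² ) · ∫_{β² q^{−2α}}^{κ} (1/(α β² p²)) · (g/β²)^{−1−1/α} · exp( −((log(γ/g) − 2a)/√(8w))² ) / (log(γ/g) − 2a) dg. Then L(γ) tends to 0 as γ → ∞. -/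
open Real Filter

set_option maxHeartbeats 2000000 in
/-- LogNormal tail contribution: with `κ = β² r₀^{-2α}`,
`L(γ) = (log(γ/κ) - 2a) · exp(((log(γ/κ) - 2a)/√(8w))²) ·
  ∫_{β² q^{-2α}}^{κ} (1/(αβ²p²)) (g/β²)^{-1-1/α}
    exp(-((log(γ/g) - 2a)/√(8w))²) / (log(γ/g) - 2a) dg`
tends to `0` as `γ → ∞`. -/
theorem stmt17 (α β p r₀ q w a : ℝ)
    (hα : 1 < α) (hβ : 0 < β) (hp : 0 < p)
    (hr₀ : 0 < r₀) (hr₀q : r₀ < q) (hqp : q ≤ p) (hw : 0 < w)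
    (κ : ℝ) (hκ : κ = β ^ 2 * r₀ ^ (-(2 * α))) :
    Tendsto (fun γ : ℝ =>
        (Real.log (γ / κ) - 2 * a) *
          Real.exp (((Real.log (γ / κ) - 2 * a) / Real.sqrt (8 * w)) ^ 2) *
          ∫ g in (β ^ 2 * q ^ (-(2 * α)))..κ,
            (1 / (α * β ^ 2 * p ^ 2)) * (g / β ^ 2) ^ (-1 - 1 / α) *
              Real.exp (-((Real.log (γ / g) - 2 * a) / Real.sqrt (8 * w)) ^ 2) /
              (Real.log (γ / g) - 2 * a))
      atTop (nhds 0) := by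
  have hα0 : 0 < α := lt_trans one_pos hα
  set c : ℝ := β ^ 2 * q ^ (-(2 * α)) with hc_def
  have hq0 : 0 < q := lt_trans hr₀ hr₀q
  have hβ2 : (0:ℝ) < β ^ 2 := by positivity
  have hc0 : 0 < c := by
    have : (0:ℝ) < q ^ (-(2*α)) := Real.rpow_pos_of_pos hq0 _
    rw [hc_def]; positivity
  have hκ0 : 0 < κ := by
    rw [hκ]
    have : (0:ℝ) < r₀ ^ (-(2*α)) := Real.rpow_pos_of_pos hr₀ _
    positivity
  have hcκ : c < κ := by
    rw [hκ, hc_def]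
    have := Real.rpow_lt_rpow_of_neg hr₀ hr₀q (by nlinarith : -(2*α) < 0)
    nlinarith
  clear_value c
  have hS : (0:ℝ) < Real.sqrt (8 * w) := Real.sqrt_pos.mpr (by linarith)
  -- T(γ) := log(γ/κ) - 2a tends to ∞
  have hT : Tendsto (fun γ : ℝ => Real.log (γ / κ) - 2 * a) atTop atTop := by
    have h1 : Tendsto (fun γ : ℝ => γ / κ) atTop atTop :=
      tendsto_id.atTop_div_const hκ0
    have h2 := Real.tendsto_log_atTop.comp h1
    simpa [sub_eq_add_neg] using tendsto_atTop_add_const_right atTop (-(2*a)) h2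
  -- constants
  set M₀ : ℝ := (1 / (α * β ^ 2 * p ^ 2)) * (c / β ^ 2) ^ (-1 - 1/α) with hM₀_def
  have hM₀ : 0 < M₀ := by
    have : (0:ℝ) < (c / β ^ 2) ^ (-1 - 1/α) := Real.rpow_pos_of_pos (by positivity) _
    rw [hM₀_def]; positivity
  clear_value M₀
  set C : ℝ := M₀ * κ * (4 * w) with hC_def
  have hC : 0 < C := by rw [hC_def]; positivity
  clear_value C
  -- squeeze
  have hev : ∀ᶠ γ : ℝ in atTop,
      (1 ≤ Real.log (γ / κ) - 2 * a) ∧ 0 < γ :=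
    (hT.eventually_ge_atTop 1).and (eventually_gt_atTop 0)
  refine squeeze_zero' (g := fun γ => C / (Real.log (γ / κ) - 2 * a)) ?_ ?_ ?_
  · -- nonnegativity
    filter_upwards [hev] with γ hγ
    obtain ⟨hT1, hγ0⟩ := hγ
    have hint : (0:ℝ) ≤ ∫ g in c..κ,
        (1 / (α * β ^ 2 * p ^ 2)) * (g / β ^ 2) ^ (-1 - 1 / α) *
          Real.exp (-((Real.log (γ / g) - 2 * a) / Real.sqrt (8 * w)) ^ 2) /
          (Real.log (γ / g) - 2 * a) := by
      apply intervalIntegral.integral_nonneg hcκ.le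
      intro g hg
      have hg0 : 0 < g := lt_of_lt_of_le hc0 hg.1
      have hD : 0 < Real.log (γ / g) - 2 * a := by
        have h1 : Real.log (γ / κ) ≤ Real.log (γ / g) := by
          apply Real.log_le_log (by positivity)
          exact div_le_div_of_nonneg_left hγ0.le hg0 hg.2
        linarith
      apply div_nonneg _ hD.le
      have h1 : (0:ℝ) < (g / β ^ 2) ^ (-1 - 1/α) := Real.rpow_pos_of_pos (by positivity) _
      positivity
    apply mul_nonneg _ hint
    apply mul_nonneg (by linarith) (Real.exp_nonneg _)
  · -- upper bound by C / T
    filter_upwards [hev] with γ hγ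
    obtain ⟨hT1, hγ0⟩ := hγ
    set T : ℝ := Real.log (γ / κ) - 2 * a with hT_def
    clear_value T
    have hT0 : 0 < T := lt_of_lt_of_le one_pos hT1
    set s : ℝ := T / (4 * w) with hs_def
    clear_value s
    have hs0 : 0 < s := by rw [hs_def]; exact div_pos hT0 (by linarith)
    set E : ℝ := Real.exp ((T / Real.sqrt (8 * w)) ^ 2) with hE_def
    clear_value E
    have hE0 : 0 < E := by rw [hE_def]; positivity
    -- pointwise bound on the interval
    have key : ∀ g ∈ Set.Icc c κ,
        T * E * ((1 / (α * β ^ 2 * p ^ 2)) * (g / β ^ 2) ^ (-1 - 1 / α) *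
          Real.exp (-((Real.log (γ / g) - 2 * a) / Real.sqrt (8 * w)) ^ 2) /
          (Real.log (γ / g) - 2 * a))
        ≤ M₀ * κ ^ (-s) * g ^ s := by
      intro g hg
      have hg0 : 0 < g := lt_of_lt_of_le hc0 hg.1
      set D : ℝ := Real.log (γ / g) - 2 * a with hD_def
      clear_value D
      have hDT : T ≤ D := by
        have h1 : Real.log (γ / κ) ≤ Real.log (γ / g) := by
          apply Real.log_le_log (by positivity)
          exact div_le_div_of_nonneg_left hγ0.le hg0 hg.2
        rw [hD_def, hT_def]; linarith
      have hD0 : 0 < D := lt_of_lt_of_le hT0 hDT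
      have hlogdiff : D - T = Real.log κ - Real.log g := by
        rw [hD_def, hT_def, Real.log_div (ne_of_gt hγ0) (ne_of_gt hg0),
          Real.log_div (ne_of_gt hγ0) (ne_of_gt hκ0)]
        ring
      have hA : (1 / (α * β ^ 2 * p ^ 2)) * (g / β ^ 2) ^ (-1 - 1 / α) ≤ M₀ := by
        rw [hM₀_def]
        have h1 : (g / β ^ 2) ^ (-1 - 1 / α) ≤ (c / β ^ 2) ^ (-1 - 1 / α) := by
          apply Real.rpow_le_rpow_of_nonpos (by positivity)
            (div_le_div_of_nonneg_right hg.1 hβ2.le)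
          have : 0 < 1/α := by positivity
          linarith
        have h2 : (0:ℝ) < 1 / (α * β ^ 2 * p ^ 2) := by positivity
        nlinarith
      have hA0 : (0:ℝ) ≤ (1 / (α * β ^ 2 * p ^ 2)) * (g / β ^ 2) ^ (-1 - 1 / α) := by
        have : (0:ℝ) < (g / β ^ 2) ^ (-1 - 1/α) := Real.rpow_pos_of_pos (by positivity) _
        positivity
      -- exponential bound : E * exp(-(D/S)^2) ≤ κ^(-s) * g^s
      have hexp : E * Real.exp (-(D / Real.sqrt (8 * w)) ^ 2) ≤ κ ^ (-s) * g ^ s := by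
        rw [hE_def, ← Real.exp_add]
        rw [Real.rpow_def_of_pos hκ0, Real.rpow_def_of_pos hg0, ← Real.exp_add]
        apply Real.exp_le_exp.mpr
        have hsq : Real.sqrt (8 * w) ^ 2 = 8 * w := Real.sq_sqrt (by linarith)
        have h1 : (T / Real.sqrt (8 * w)) ^ 2 + -(D / Real.sqrt (8 * w)) ^ 2
            = (T^2 - D^2) / (8 * w) := by
          rw [div_pow, div_pow, hsq]
          ring
        rw [h1]
        have h4ws : (4*w) * s = T := by rw [hs_def]; field_simp
        have hlg : 0 ≤ Real.log κ - Real.log g := by rw [← hlogdiff]; linarith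
        have key2 : s * (Real.log κ - Real.log g) * (8*w) = 2 * T * (D - T) := by
          rw [← hlogdiff]
          linear_combination (2*(D - T)) * h4ws
        have h2 : s * (Real.log κ - Real.log g) ≤ (D^2 - T^2) / (8*w) := by
          rw [le_div_iff₀ (by linarith : (0:ℝ) < 8*w), key2]
          nlinarith [sq_nonneg (D - T), hT0, hDT]
        have h3 : (T^2 - D^2) / (8*w) ≤ - (s * (Real.log κ - Real.log g)) := by
          have h4 : (T^2 - D^2) / (8*w) = -((D^2 - T^2) / (8*w)) := by ring
          linarith
        nlinarith [h3]
      -- combine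
      have hTD : T / D ≤ 1 := (div_le_one hD0).mpr hDT
      calc T * E * ((1 / (α * β ^ 2 * p ^ 2)) * (g / β ^ 2) ^ (-1 - 1 / α) *
            Real.exp (-(D / Real.sqrt (8 * w)) ^ 2) / D)
          = ((1 / (α * β ^ 2 * p ^ 2)) * (g / β ^ 2) ^ (-1 - 1 / α)) * (T / D) *
            (E * Real.exp (-(D / Real.sqrt (8 * w)) ^ 2)) := by
            field_simp
        _ ≤ M₀ * 1 * (κ ^ (-s) * g ^ s) := by
            apply mul_le_mul _ hexp
              (mul_nonneg hE0.le (Real.exp_nonneg _))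
              (by nlinarith [hM₀] : (0:ℝ) ≤ M₀ * 1)
            exact mul_le_mul hA hTD (div_nonneg hT0.le hD0.le) hM₀.le
        _ = M₀ * κ ^ (-s) * g ^ s := by ring
    -- integrability of both sides
    have hne : ∀ g ∈ Set.Icc c κ, g ≠ 0 := fun g hg =>
      ne_of_gt (lt_of_lt_of_le hc0 hg.1)
    have hDne : ∀ g ∈ Set.Icc c κ, Real.log (γ / g) - 2 * a ≠ 0 := by
      intro g hg
      have hg0 : 0 < g := lt_of_lt_of_le hc0 hg.1
      have h1 : Real.log (γ / κ) ≤ Real.log (γ / g) := by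
        apply Real.log_le_log (by positivity)
        exact div_le_div_of_nonneg_left hγ0.le hg0 hg.2
      have h2 : 0 < Real.log (γ / g) - 2 * a := by
        rw [hT_def] at hT1; linarith
      exact ne_of_gt h2
    have hlogcont : ContinuousOn (fun g : ℝ => Real.log (γ / g)) (Set.Icc c κ) := by
      apply Real.continuousOn_log.comp (continuousOn_const.div continuousOn_id hne)
      intro g hg
      simp only [Set.mem_compl_iff, Set.mem_singleton_iff]
      exact div_ne_zero (ne_of_gt hγ0) (hne g hg)
    have hcont1 : ContinuousOn (fun g : ℝ =>
        T * E * ((1 / (α * β ^ 2 * p ^ 2)) * (g / β ^ 2) ^ (-1 - 1 / α) *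
          Real.exp (-((Real.log (γ / g) - 2 * a) / Real.sqrt (8 * w)) ^ 2) /
          (Real.log (γ / g) - 2 * a))) (Set.uIcc c κ) := by
      rw [Set.uIcc_of_le hcκ.le]
      apply ContinuousOn.mul continuousOn_const
      apply ContinuousOn.div
      · apply ContinuousOn.mul
        · apply ContinuousOn.mul continuousOn_const
          apply ContinuousOn.rpow_const (continuousOn_id.div_const _)
          intro g hg
          left
          exact div_ne_zero (hne g hg) (ne_of_gt hβ2)
        · apply Real.continuous_exp.comp_continuousOn
          apply ContinuousOn.neg
          apply ContinuousOn.pow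
          apply ContinuousOn.div_const
          exact hlogcont.sub continuousOn_const
      · exact hlogcont.sub continuousOn_const
      · exact hDne
    have hcont2 : ContinuousOn (fun g : ℝ => M₀ * κ ^ (-s) * g ^ s) (Set.uIcc c κ) := by
      apply ContinuousOn.mul continuousOn_const
      apply ContinuousOn.rpow_const continuousOn_id
      intro g hg
      rw [Set.uIcc_of_le hcκ.le] at hg
      left; exact ne_of_gt (lt_of_lt_of_le hc0 hg.1)
    have hint1 := hcont1.intervalIntegrable (μ := MeasureTheory.volume)
    have hint2 := hcont2.intervalIntegrable (μ := MeasureTheory.volume)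
    -- the main bound
    have hmono := intervalIntegral.integral_mono_on hcκ.le hint1 hint2 key
    have hpull : (∫ g in c..κ,
        T * E * ((1 / (α * β ^ 2 * p ^ 2)) * (g / β ^ 2) ^ (-1 - 1 / α) *
          Real.exp (-((Real.log (γ / g) - 2 * a) / Real.sqrt (8 * w)) ^ 2) /
          (Real.log (γ / g) - 2 * a)))
        = T * E * ∫ g in c..κ,
          (1 / (α * β ^ 2 * p ^ 2)) * (g / β ^ 2) ^ (-1 - 1 / α) *
            Real.exp (-((Real.log (γ / g) - 2 * a) / Real.sqrt (8 * w)) ^ 2) /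
            (Real.log (γ / g) - 2 * a) :=
      intervalIntegral.integral_const_mul _ _
    have hrpowint : (∫ g in c..κ, M₀ * κ ^ (-s) * g ^ s)
        = M₀ * κ ^ (-s) * ((κ ^ (s+1) - c ^ (s+1)) / (s+1)) := by
      rw [intervalIntegral.integral_const_mul]
      rw [integral_rpow (Or.inl (by linarith))]
    have hbound2 : M₀ * κ ^ (-s) * ((κ ^ (s+1) - c ^ (s+1)) / (s+1)) ≤ C / T := by
      have h1 : κ ^ (-s) * κ ^ (s+1) = κ := by
        rw [← Real.rpow_add hκ0]
        norm_num
      have hc1 : (0:ℝ) < c ^ (s+1) := Real.rpow_pos_of_pos hc0 _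
      have hκs : (0:ℝ) < κ ^ (-s) := Real.rpow_pos_of_pos hκ0 _
      have hs1 : (0:ℝ) < s + 1 := by linarith
      have h2 : M₀ * κ ^ (-s) * ((κ ^ (s+1) - c ^ (s+1)) / (s+1))
          ≤ M₀ * κ ^ (-s) * (κ ^ (s+1) / (s+1)) := by
        apply mul_le_mul_of_nonneg_left _ (mul_nonneg hM₀.le hκs.le)
        apply div_le_div_of_nonneg_right (by linarith) hs1.le
      have h3 : M₀ * κ ^ (-s) * (κ ^ (s+1) / (s+1)) = M₀ * κ / (s+1) := by
        calc M₀ * κ ^ (-s) * (κ ^ (s+1) / (s+1))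
            = M₀ * ((κ ^ (-s) * κ ^ (s+1)) / (s+1)) := by ring
          _ = M₀ * κ / (s+1) := by rw [h1]; ring
      have h4ws : (4*w) * s = T := by rw [hs_def]; field_simp
      have h4 : M₀ * κ / (s+1) ≤ C / T := by
        rw [div_le_div_iff₀ hs1 hT0, hC_def]
        nlinarith [hM₀, hκ0, hw, hs0, h4ws, mul_pos hM₀ hκ0]
      linarith
    rw [hpull] at hmono
    rw [hrpowint] at hmono
    exact le_trans hmono hbound2
  · -- C / T → 0
    exact tendsto_const_nhds.div_atTop hT
end

section
/- Let α > 1, β > 0, 0 ≤ d < p, 0 < r_0 < p − d, λ > 0, and t > 0. Set κ = β² r_0^{−2α}. Let μ be a finite Borel measure on ℝ supported in the interval [β²(p+d)^{−2α}, β²(p−d)^{−2α}]. Define for γ > 0: S(γ) = (r_0²/p²)·exp(−(γ/(κ λ²))^{t/2}) + ∫_{β²(p−d)^{−2α}}^{κ} exp(−(γ/(g λ²))^{t/2}) · (1/(α β² p²)) · (g/β²)^{−1−1/α} dg + ∫ exp(−(γ/(g λ²))^{t/2}) dμ(g). Then S(γ)·exp((γ/(κ λ²))^{t/2}) tends to r_0²/p²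 as γ → ∞. -/
open Real Filter MeasureTheory

private lemma exp_diff_tendsto (κ lam t : ℝ) (hκ : 0 < κ) (hlam : 0 < lam) (ht : 0 < t)
    {g : ℝ} (hg : 0 < g) (hgκ : g < κ) :
    Tendsto (fun γ : ℝ => Real.exp ((γ / (κ * lam ^ 2)) ^ (t / 2)
      - (γ / (g * lam ^ 2)) ^ (t / 2))) atTop (nhds 0) := by
  have hc : (κ * lam ^ 2) ^ (-(t/2)) - (g * lam ^ 2) ^ (-(t/2)) < 0 := by
    have := Real.rpow_lt_rpow_of_neg (x := g * lam ^ 2) (y := κ * lam ^ 2)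
      (by positivity) (mul_lt_mul_of_pos_right hgκ (by positivity))
      (neg_neg_of_pos (by positivity) : -(t/2) < 0)
    linarith
  have h1 : Tendsto (fun γ : ℝ => γ ^ (t/2) *
      ((κ * lam ^ 2) ^ (-(t/2)) - (g * lam ^ 2) ^ (-(t/2)))) atTop atBot :=
    (tendsto_rpow_atTop (by linarith)).atTop_mul_const_of_neg hc
  have h2 := Real.tendsto_exp_atBot.comp h1
  refine h2.congr' ?_
  filter_upwards [eventually_ge_atTop (0:ℝ)] with γ hγ
  simp only [Function.comp]
  congr 1
  rw [Real.div_rpow hγ (by positivity), Real.div_rpow hγ (by positivity),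
    Real.rpow_neg (by positivity), Real.rpow_neg (by positivity)]
  ring

theorem stmt18 (α β d p r₀ lam t : ℝ)
    (hα : 1 < α) (hβ : 0 < β) (hd : 0 ≤ d) (hdp : d < p)
    (hr₀ : 0 < r₀) (hr₀pd : r₀ < p - d) (hlam : 0 < lam) (ht : 0 < t)
    (κ : ℝ) (hκ : κ = β ^ 2 * r₀ ^ (-(2 * α)))
    (μ : Measure ℝ) [IsFiniteMeasure μ]
    (hsupp : μ (Set.Icc (β ^ 2 * (p + d) ^ (-(2 * α))) (β ^ 2 * (p - d) ^ (-(2 * α))))ᶜ = 0)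
    (S : ℝ → ℝ)
    (hS : ∀ γ, S γ =
      (r₀ ^ 2 / p ^ 2) * Real.exp (-((γ / (κ * lam ^ 2)) ^ (t / 2)))
      + (∫ g in (β ^ 2 * (p - d) ^ (-(2 * α)))..κ,
          Real.exp (-((γ / (g * lam ^ 2)) ^ (t / 2))) *
            (1 / (α * β ^ 2 * p ^ 2)) * (g / β ^ 2) ^ (-1 - 1 / α))
      + ∫ g, Real.exp (-((γ / (g * lam ^ 2)) ^ (t / 2))) ∂μ) :
    Tendsto (fun γ => S γ * Real.exp ((γ / (κ * lam ^ 2)) ^ (t / 2)))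
      atTop (nhds (r₀ ^ 2 / p ^ 2)) := by
  have hp : 0 < p := lt_of_le_of_lt hd hdp
  have hpd : 0 < p - d := sub_pos.2 hdp
  set b : ℝ := β ^ 2 * (p - d) ^ (-(2 * α)) with hb
  set a : ℝ := β ^ 2 * (p + d) ^ (-(2 * α)) with ha
  have hb0 : 0 < b := by positivity
  have ha0 : 0 < a := by have : 0 < p + d := by linarith
                         positivity
  have hκ0 : 0 < κ := by rw [hκ]; positivity
  have hbκ : b < κ := by
    rw [hκ, hb]
    have := Real.rpow_lt_rpow_of_neg hr₀ hr₀pd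
      (neg_neg_of_pos (by linarith) : -(2*α) < 0)
    exact mul_lt_mul_of_pos_left this (by positivity)
  have hlam2 : (0:ℝ) < lam ^ 2 := by positivity
  -- useful positivity of constant factor
  have hc0 : (0:ℝ) < 1 / (α * β ^ 2 * p ^ 2) := by positivity
  -- the monotone bound: for γ ≥ 0, 0 < g ≤ κ, A γ ≤ B γ g
  have hAB : ∀ γ : ℝ, 0 ≤ γ → ∀ g : ℝ, 0 < g → g ≤ κ →
      (γ / (κ * lam ^ 2)) ^ (t / 2) ≤ (γ / (g * lam ^ 2)) ^ (t / 2) := by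
    intro γ hγ g hg hgκ
    apply Real.rpow_le_rpow (by positivity) _ (by positivity)
    apply div_le_div_of_nonneg_left hγ (by positivity)
    nlinarith
  -- DCT for the interval-integral part
  have hI : Tendsto (fun γ : ℝ => ∫ g in Set.Ioc b κ,
      (Real.exp (-((γ / (g * lam ^ 2)) ^ (t / 2))) * (1 / (α * β ^ 2 * p ^ 2))
        * (g / β ^ 2) ^ (-1 - 1 / α)) * Real.exp ((γ / (κ * lam ^ 2)) ^ (t / 2)))
      atTop (nhds 0) := by
    have h0 : (0:ℝ) = ∫ g in Set.Ioc b κ, (0:ℝ) := by simp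
    rw [h0]
    apply tendsto_integral_filter_of_dominated_convergence
      (bound := fun g : ℝ => (1 / (α * β ^ 2 * p ^ 2)) * (g / β ^ 2) ^ (-1 - 1 / α))
    · filter_upwards with γ
      apply Measurable.aestronglyMeasurable
      fun_prop
    · filter_upwards [eventually_ge_atTop (0:ℝ)] with γ hγ
      rw [ae_restrict_iff' measurableSet_Ioc]
      filter_upwards with g hg
      have hg0 : 0 < g := hb0.trans hg.1
      have hpow : (0:ℝ) ≤ (g / β ^ 2) ^ (-1 - 1 / α) := Real.rpow_nonneg (by positivity) _
      rw [Real.norm_eq_abs, abs_of_nonneg (by positivity)]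
      have heq : Real.exp (-((γ / (g * lam ^ 2)) ^ (t / 2))) * (1 / (α * β ^ 2 * p ^ 2))
          * (g / β ^ 2) ^ (-1 - 1 / α) * Real.exp ((γ / (κ * lam ^ 2)) ^ (t / 2))
          = Real.exp ((γ / (κ * lam ^ 2)) ^ (t / 2) - (γ / (g * lam ^ 2)) ^ (t / 2))
            * ((1 / (α * β ^ 2 * p ^ 2)) * (g / β ^ 2) ^ (-1 - 1 / α)) := by
        rw [Real.exp_sub, Real.exp_neg]; ring
      rw [heq]
      apply mul_le_of_le_one_left (by positivity)
      rw [Real.exp_le_one_iff, sub_nonpos]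
      exact hAB γ hγ g hg0 hg.2
    · apply IntegrableOn.mono_set _ Set.Ioc_subset_Icc_self
      apply ContinuousOn.integrableOn_Icc
      apply continuousOn_const.mul
      apply ContinuousOn.rpow_const (continuousOn_id.div_const _)
      intro g hg
      have : 0 < g := hb0.trans_le hg.1
      exact Or.inl (by positivity)
    · have hne : ∀ᵐ g : ℝ ∂(volume.restrict (Set.Ioc b κ)), g ≠ κ := by
        apply Filter.Eventually.filter_mono (ae_mono Measure.restrict_le_self)
        rw [ae_iff]
        simp only [not_not]
        have h' : {g : ℝ | g = κ} = {κ} := by ext x; simp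
        rw [h']
        exact Real.volume_singleton
      filter_upwards [ae_restrict_mem measurableSet_Ioc, hne] with g hg hgne
      have hg0 : 0 < g := hb0.trans hg.1
      have hgκ : g < κ := lt_of_le_of_ne hg.2 hgne
      have := (exp_diff_tendsto κ lam t hκ0 hlam ht hg0 hgκ).mul_const
        ((1 / (α * β ^ 2 * p ^ 2)) * (g / β ^ 2) ^ (-1 - 1 / α))
      rw [zero_mul] at this
      refine this.congr fun γ => ?_
      rw [Real.exp_sub, Real.exp_neg]; ring
  -- DCT for the μ part
  have hμae : ∀ᵐ g ∂μ, g ∈ Set.Icc a b := by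
    rw [ae_iff]
    exact hsupp
  have hJ : Tendsto (fun γ : ℝ => ∫ g, Real.exp (-((γ / (g * lam ^ 2)) ^ (t / 2)))
      * Real.exp ((γ / (κ * lam ^ 2)) ^ (t / 2)) ∂μ) atTop (nhds 0) := by
    have h0 : (0:ℝ) = ∫ _g, (0:ℝ) ∂μ := by simp
    rw [h0]
    apply tendsto_integral_filter_of_dominated_convergence (bound := fun _ => (1:ℝ))
    · filter_upwards with γ
      apply Measurable.aestronglyMeasurable
      fun_prop
    · filter_upwards [eventually_ge_atTop (0:ℝ)] with γ hγ
      filter_upwards [hμae] with g hg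
      have hg0 : 0 < g := ha0.trans_le hg.1
      rw [Real.norm_eq_abs, abs_of_nonneg (by positivity), ← Real.exp_add]
      rw [Real.exp_le_one_iff]
      have := hAB γ hγ g hg0 (hg.2.trans hbκ.le)
      linarith
    · exact integrable_const 1
    · filter_upwards [hμae] with g hg
      have hg0 : 0 < g := ha0.trans_le hg.1
      have hgκ : g < κ := lt_of_le_of_lt hg.2 hbκ
      refine (exp_diff_tendsto κ lam t hκ0 hlam ht hg0 hgκ).congr fun γ => ?_
      rw [Real.exp_sub, Real.exp_neg]; ring
  -- pull the exponential inside the integrals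
  have heq : ∀ γ : ℝ, S γ * Real.exp ((γ / (κ * lam ^ 2)) ^ (t / 2))
      = r₀ ^ 2 / p ^ 2
      + ((∫ g in Set.Ioc b κ,
          (Real.exp (-((γ / (g * lam ^ 2)) ^ (t / 2))) * (1 / (α * β ^ 2 * p ^ 2))
            * (g / β ^ 2) ^ (-1 - 1 / α)) * Real.exp ((γ / (κ * lam ^ 2)) ^ (t / 2)))
        + ∫ g, Real.exp (-((γ / (g * lam ^ 2)) ^ (t / 2)))
            * Real.exp ((γ / (κ * lam ^ 2)) ^ (t / 2)) ∂μ) := by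
    intro γ
    rw [hS γ]
    rw [← intervalIntegral.integral_of_le hbκ.le, intervalIntegral.integral_mul_const,
      integral_mul_const]
    have h1 : Real.exp (-((γ / (κ * lam ^ 2)) ^ (t / 2)))
        * Real.exp ((γ / (κ * lam ^ 2)) ^ (t / 2)) = 1 := by
      rw [← Real.exp_add]; simp
    calc (r₀ ^ 2 / p ^ 2 * Real.exp (-((γ / (κ * lam ^ 2)) ^ (t / 2)))
          + (∫ g in b..κ, Real.exp (-((γ / (g * lam ^ 2)) ^ (t / 2)))
              * (1 / (α * β ^ 2 * p ^ 2)) * (g / β ^ 2) ^ (-1 - 1 / α))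
          + ∫ g, Real.exp (-((γ / (g * lam ^ 2)) ^ (t / 2))) ∂μ)
          * Real.exp ((γ / (κ * lam ^ 2)) ^ (t / 2))
        = r₀ ^ 2 / p ^ 2 * (Real.exp (-((γ / (κ * lam ^ 2)) ^ (t / 2)))
            * Real.exp ((γ / (κ * lam ^ 2)) ^ (t / 2)))
          + ((∫ g in b..κ, Real.exp (-((γ / (g * lam ^ 2)) ^ (t / 2)))
              * (1 / (α * β ^ 2 * p ^ 2)) * (g / β ^ 2) ^ (-1 - 1 / α))
              * Real.exp ((γ / (κ * lam ^ 2)) ^ (t / 2))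
            + (∫ g, Real.exp (-((γ / (g * lam ^ 2)) ^ (t / 2))) ∂μ)
              * Real.exp ((γ / (κ * lam ^ 2)) ^ (t / 2))) := by ring
      _ = _ := by
        rw [h1, mul_one, ← intervalIntegral.integral_mul_const,
          intervalIntegral.integral_of_le hbκ.le, ← integral_mul_const]
  have hsum := hI.add hJ
  rw [add_zero] at hsum
  have := (tendsto_const_nhds (x := r₀ ^ 2 / p ^ 2) (f := atTop)).add hsum
  rw [add_zero] at this
  exact this.congr fun γ => (heq γ).symm
end
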